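/- arXiv:1509.05957 — 3 statements merged into one kernel-verified Lean document; each statement's English description precedes it below -/
import Mathlib

section
/- Let u ∈ M(A,I) be a nonempty connected trace. For all x ∈ ℕ and traces y₁, y₂: u^x = y₁y₂ if and only if there exist l, k, c ∈ ℕ and traces s, p such that y₁ = u^l s, y₂ = p u^k, s p = u^c, l + k + c = x, and c ≤ |A|. -/
/-- The commutation relation on words generated by an independence relation. -/
def traceRel (A : Type) (I : A → A → Prop) : FreeMonoid A → FreeMonoid A → Prop :=
  fun x y => ∃ a b, I a b ∧ x = FreeMonoid.of a * FreeMonoid.of b ∧ y = FreeMonoid.of b * FreeMonoid.of a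

/-- The trace congruence ≡_I. -/
def traceCon (A : Type) (I : A → A → Prop) : Con (FreeMonoid A) := conGen (traceRel A I)

/-- The trace monoid M(A,I). -/
abbrev Trace (A : Type) (I : A → A → Prop) := (traceCon A I).Quotient

/-- The trace represented by a word. -/
def trc (A : Type) (I : A → A → Prop) (w : FreeMonoid A) : Trace A I := (traceCon A I).mk' w

/-- s I t: every letter of s is independent of every letter of t. -/
def TraceIndep (A : Type) (I : A → A → Prop) (s t : Trace A I) : Prop :=
  ∀ w w' : FreeMonoid A, s = trc A I w → t = trc A I w' →
    ∀ a ∈ w.toList, ∀ b ∈ w'.toList, I a b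

/-- A trace is connected if it has no nontrivial factorization into independent factors. -/
def TraceConnected (A : Type) (I : A → A → Prop) (t : Trace A I) : Prop :=
  ∀ u v : Trace A I, t = u * v → TraceIndep A I u v → u = 1 ∨ v = 1

/-- The set of prefixes of a trace. -/
def tracePrefixes (A : Type) (I : A → A → Prop) (t : Trace A I) : Set (Trace A I) :=
  {p | ∃ q, t = p * q}

/-! Induction on `x` through Levi's lemma: `y₁ y₂ = u · uˣ` splits as `y₁ = r₁ r₂`, `y₂ = r₃ r₄`
with `u = r₁ r₃`, `uˣ = r₂ r₄` and `r₂` independent of `r₃`, and induction applies to `r₂ r₄`.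
If `r₃ = 1` the new copy of `u` joins the power on the left; if `r₁ = 1` then `r₂` is independent
of `u`, hence trivial, and everything is a power on the right. Otherwise independence keeps any
copy of `u` out of `r₂`, so `r₁` joins `s` and `r₃` joins `p`; as `u = r₁ r₃` is connected, `r₁`
has a letter outside `s`. So the alphabet of `s` grows with `c`, and `c ≤ |alph s| ≤ |A|`.
Levi's lemma reduces to moving a single letter to the front, which is checked along a chain of
elementary commutations of words. -/

namespace Trace

variable {A : Type} {I : A → A → Prop}

inductive Step (I : A → A → Prop) : List A → List A → Prop
  | swap {a b : A} (w : List A) : I a b → Step I (a :: b :: w) (b :: a :: w)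
  | cons (c : A) {w w' : List A} : Step I w w' → Step I (c :: w) (c :: w')

-- Not symmetrised: it is the trace congruence only for symmetric `I` (`ofList_eq_ofList_iff`).
def Cong (I : A → A → Prop) : List A → List A → Prop := Relation.ReflTransGen (Step I)

theorem Step.symm (hsym : ∀ a b, I a b → I b a) {w w' : List A} (h : Step I w w') :
    Step I w' w := by
  induction h with
  | swap w hab => exact .swap w (hsym _ _ hab)
  | cons c _ ih => exact .cons c ih

theorem Step.append_left {w w' : List A} (h : Step I w w') (z : List A) :
    Step I (z ++ w) (z ++ w') := by
  induction z with
  | nil => exact h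
  | cons c z ih => exact .cons c ih

theorem Step.append_right {w w' : List A} (h : Step I w w') (z : List A) :
    Step I (w ++ z) (w' ++ z) := by
  induction h with
  | swap w hab => exact .swap _ hab
  | cons c _ ih => exact .cons c ih

theorem Cong.symm (hsym : ∀ a b, I a b → I b a) {w w' : List A} (h : Cong I w w') :
    Cong I w' w := by
  induction h with
  | refl => exact .refl
  | tail _ h ih => exact .head (h.symm hsym) ih

theorem Cong.cons (c : A) {w w' : List A} (h : Cong I w w') : Cong I (c :: w) (c :: w') :=
  Relation.ReflTransGen.lift _ (fun _ _ h => h.cons c) _ _ h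

theorem Cong.append {w w' v v' : List A} (hw : Cong I w w') (hv : Cong I v v') :
    Cong I (w ++ v) (w' ++ v') :=
  (Relation.ReflTransGen.lift (· ++ v) (fun _ _ h => h.append_right v) _ _ hw).trans
    (Relation.ReflTransGen.lift (w' ++ ·) (fun _ _ h => h.append_left w') _ _ hv)

theorem Step.exists_split {x : A} {v₁ v₂ v : List A} (h : Step I (v₁ ++ x :: v₂) v)
    (hx : ∀ a ∈ v₁, I x a) :
    ∃ v₁' v₂', v = v₁' ++ x :: v₂' ∧ (∀ a ∈ v₁', I x a) ∧ Cong I (v₁ ++ v₂) (v₁' ++ v₂') := by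
  induction v₁ generalizing v with
  | nil =>
    cases h with
    | @swap _ b w hab => exact ⟨[b], w, rfl, by simpa using hab, .refl⟩
    | cons _ h => exact ⟨[], _, rfl, by simp, .single h⟩
  | cons y v₁ ih =>
    rw [List.cons_append] at h
    generalize hv : v₁ ++ x :: v₂ = w at h
    cases h with
    | swap w hyb =>
      cases v₁ with
      | nil =>
        obtain ⟨rfl, rfl⟩ := List.cons.inj hv
        exact ⟨[], y :: v₂, rfl, by simp, .refl⟩
      | cons c v₁ =>
        obtain ⟨rfl, rfl⟩ := List.cons.inj hv
        refine ⟨c :: y :: v₁, v₂, rfl, ?_, .single (.swap _ hyb)⟩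
        intro a ha
        exact hx a (by simp at ha ⊢; tauto)
    | cons _ h =>
      subst hv
      obtain ⟨v₁', v₂', rfl, hx', hc⟩ := ih h fun a ha => hx a (by simp [ha])
      refine ⟨y :: v₁', v₂', rfl, ?_, hc.cons y⟩
      intro a ha
      rcases List.mem_cons.mp ha with rfl | ha
      · exact hx a (by simp)
      · exact hx' a ha

theorem Cong.exists_split {x : A} {w v : List A} (h : Cong I (x :: w) v) :
    ∃ v₁ v₂, v = v₁ ++ x :: v₂ ∧ (∀ a ∈ v₁, I x a) ∧ Cong I w (v₁ ++ v₂) := by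
  induction h with
  | refl => exact ⟨[], w, rfl, by simp, .refl⟩
  | tail _ hstep ih =>
    obtain ⟨v₁, v₂, rfl, hx, hc⟩ := ih
    obtain ⟨v₁', v₂', rfl, hx', hc'⟩ := hstep.exists_split hx
    exact ⟨v₁', v₂', rfl, hx', hc.trans hc'⟩

def ofList (l : List A) : Trace A I := trc A I (FreeMonoid.ofList l)

def of (x : A) : Trace A I := ofList [x]

@[simp] theorem ofList_nil : (ofList [] : Trace A I) = 1 := rfl

@[simp] theorem ofList_append (l l' : List A) :
    (ofList (l ++ l') : Trace A I) = ofList l * ofList l' := rfl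

@[simp] theorem ofList_cons (x : A) (l : List A) :
    (ofList (x :: l) : Trace A I) = of x * ofList l := rfl

theorem exists_ofList (t : Trace A I) : ∃ l, ofList l = t := by
  obtain ⟨w, rfl⟩ := (traceCon A I).mk'_surjective t
  exact ⟨w.toList, rfl⟩

@[elab_as_elim]
theorem induction_on {P : Trace A I → Prop} (t : Trace A I) (one : P 1)
    (of_mul : ∀ x t, P t → P (of x * t)) : P t := by
  obtain ⟨l, rfl⟩ := exists_ofList t
  induction l with
  | nil => exact one
  | cons x l ih => exact of_mul x _ ih

theorem of_commute {a b : A} (h : I a b) : Commute (of a : Trace A I) (of b) :=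
  (traceCon A I).eq.mpr (ConGen.Rel.of _ _ ⟨a, b, h, rfl, rfl⟩)

theorem Step.ofList_eq {l l' : List A} (h : Step I l l') : (ofList l : Trace A I) = ofList l' := by
  induction h with
  | swap w hab => simp only [ofList_cons, ← mul_assoc, (of_commute hab).eq]
  | cons c _ ih => simp only [ofList_cons, ih]

theorem Cong.of_traceCon (hsym : ∀ a b, I a b → I b a) {w v : FreeMonoid A}
    (h : traceCon A I w v) : Cong I w.toList v.toList := by
  induction h with
  | of _ _ hwv =>
    obtain ⟨a, b, hab, rfl, rfl⟩ := hwv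
    exact .single (.swap [] hab)
  | refl => exact .refl
  | symm _ ih => exact ih.symm hsym
  | trans _ _ ih ih' => exact ih.trans ih'
  | mul _ _ ih ih' => exact ih.append ih'

theorem ofList_eq_ofList_iff (hsym : ∀ a b, I a b → I b a) {l l' : List A} :
    (ofList l : Trace A I) = ofList l' ↔ Cong I l l' := by
  refine ⟨fun h => Cong.of_traceCon hsym ((traceCon A I).eq.mp h), fun h => ?_⟩
  induction h with
  | refl => rfl
  | tail _ hstep ih => exact ih.trans hstep.ofList_eq

theorem toList_perm_of_traceCon {w v : FreeMonoid A} (h : traceCon A I w v) :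
    w.toList.Perm v.toList := by
  induction h with
  | of _ _ hwv =>
    obtain ⟨a, b, -, rfl, rfl⟩ := hwv
    exact .swap b a []
  | refl => exact .refl _
  | symm _ ih => exact ih.symm
  | trans _ _ ih ih' => exact ih.trans ih'
  | mul _ _ ih ih' => exact ih.append ih'

def content (t : Trace A I) : Multiset A :=
  Con.liftOn t (fun w => (w.toList : Multiset A))
    (fun _ _ h => Multiset.coe_eq_coe.mpr (toList_perm_of_traceCon h))

@[simp] theorem content_ofList (l : List A) : content (ofList l : Trace A I) = l := rfl

@[simp] theorem content_one : content (1 : Trace A I) = 0 := rfl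

@[simp] theorem content_of (x : A) : content (of x : Trace A I) = {x} := rfl

@[simp] theorem content_mul (s t : Trace A I) : content (s * t) = content s + content t := by
  obtain ⟨l, rfl⟩ := exists_ofList s
  obtain ⟨l', rfl⟩ := exists_ofList t
  rw [← ofList_append, content_ofList, content_ofList, content_ofList, Multiset.coe_add]

@[simp] theorem content_pow (t : Trace A I) (n : ℕ) : content (t ^ n) = n • content t := by
  induction n with
  | zero => simp
  | succ n ih => rw [pow_succ, content_mul, ih, succ_nsmul]

@[simp] theorem content_eq_zero {t : Trace A I} : content t = 0 ↔ t = 1 := by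
  obtain ⟨l, rfl⟩ := exists_ofList t
  refine ⟨fun h => ?_, fun h => h ▸ content_one⟩
  rw [content_ofList, Multiset.coe_eq_zero] at h
  rw [h, ofList_nil]

theorem traceIndep_iff {s t : Trace A I} :
    TraceIndep A I s t ↔ ∀ a ∈ content s, ∀ b ∈ content t, I a b := by
  refine ⟨fun h a ha b hb => ?_, fun h w w' hw hw' a ha b hb => h a ?_ b ?_⟩
  · obtain ⟨l, rfl⟩ := exists_ofList s
    obtain ⟨l', rfl⟩ := exists_ofList t
    exact h _ _ rfl rfl a ha b hb
  · rw [hw]; exact ha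
  · rw [hw']; exact hb

theorem traceIndep_one_left (t : Trace A I) : TraceIndep A I 1 t :=
  traceIndep_iff.mpr (by simp)

@[simp] theorem traceIndep_mul_left {s₁ s₂ t : Trace A I} :
    TraceIndep A I (s₁ * s₂) t ↔ TraceIndep A I s₁ t ∧ TraceIndep A I s₂ t := by
  simp only [traceIndep_iff, content_mul, Multiset.mem_add]
  grind

@[simp] theorem traceIndep_mul_right {s t₁ t₂ : Trace A I} :
    TraceIndep A I s (t₁ * t₂) ↔ TraceIndep A I s t₁ ∧ TraceIndep A I s t₂ := by
  simp only [traceIndep_iff, content_mul, Multiset.mem_add]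
  grind

theorem traceIndep_self (hirr : ∀ a, ¬ I a a) {t : Trace A I} : TraceIndep A I t t ↔ t = 1 := by
  refine ⟨fun h => ?_, fun h => h ▸ traceIndep_one_left 1⟩
  rw [← content_eq_zero, Multiset.eq_zero_iff_forall_notMem]
  exact fun a ha => hirr a (traceIndep_iff.mp h a ha a ha)

theorem _root_.TraceIndep.mono_left {s s' t : Trace A I} (h : TraceIndep A I s t)
    (hs : content s' ⊆ content s) : TraceIndep A I s' t :=
  traceIndep_iff.mpr fun a ha => traceIndep_iff.mp h a (hs ha)

theorem _root_.TraceIndep.mono_right {s t t' : Trace A I} (h : TraceIndep A I s t)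
    (ht : content t' ⊆ content t) : TraceIndep A I s t' :=
  traceIndep_iff.mpr fun a ha b hb => traceIndep_iff.mp h a ha b (ht hb)

theorem of_commute_of_traceIndep {x : A} {t : Trace A I} (h : TraceIndep A I (of x) t) :
    Commute (of x) t := by
  induction t using induction_on with
  | one => exact Commute.one_right _
  | of_mul y t ih =>
    rw [traceIndep_mul_right] at h
    exact (of_commute (traceIndep_iff.mp h.1 x (by simp) y (by simp))).mul_right (ih h.2)

theorem _root_.TraceIndep.commute {s t : Trace A I} (h : TraceIndep A I s t) : Commute s t := by
  induction s using induction_on with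
  | one => exact Commute.one_left t
  | of_mul x s ih =>
    rw [traceIndep_mul_left] at h
    exact (of_commute_of_traceIndep h.1).mul_left (ih h.2)

theorem ofList_append_cons_of_indep {x : A} {v₁ v₂ : List A} (hx : ∀ a ∈ v₁, I x a) :
    (ofList (v₁ ++ x :: v₂) : Trace A I) = of x * ofList (v₁ ++ v₂) := by
  have : TraceIndep A I (of x) (ofList v₁) := traceIndep_iff.mpr (by simpa using hx)
  rw [ofList_append, ofList_cons, ← mul_assoc, ← this.commute.eq, mul_assoc, ofList_append]

/-- Levi's lemma for a single letter. -/
theorem of_mul_eq_mul_cases (hsym : ∀ a b, I a b → I b a) {x : A} {t w₁ w₂ : Trace A I}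
    (h : of x * t = w₁ * w₂) :
    (∃ w₁', w₁ = of x * w₁' ∧ t = w₁' * w₂) ∨
      ∃ w₂', w₂ = of x * w₂' ∧ TraceIndep A I (of x) w₁ ∧ t = w₁ * w₂' := by
  obtain ⟨l, rfl⟩ := exists_ofList t
  obtain ⟨z₁, rfl⟩ := exists_ofList w₁
  obtain ⟨z₂, rfl⟩ := exists_ofList w₂
  rw [← ofList_cons, ← ofList_append, ofList_eq_ofList_iff hsym] at h
  obtain ⟨v₁, v₂, hv, hx, hc⟩ := h.exists_split
  rw [← ofList_eq_ofList_iff hsym] at hc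
  rcases List.append_eq_append_iff.mp hv with ⟨m, rfl, rfl⟩ | ⟨_ | ⟨y, m⟩, rfl, hm⟩
  · refine .inr ⟨ofList (m ++ v₂), ofList_append_cons_of_indep fun a ha => hx a (by simp [ha]),
      traceIndep_iff.mpr fun a ha b hb => ?_, by simpa using hc⟩
    rw [content_of, Multiset.mem_singleton] at ha
    exact ha ▸ hx b (List.mem_append_left m (by simpa using hb))
  · obtain rfl : z₂ = x :: v₂ := by simpa using hm.symm
    refine .inr ⟨ofList v₂, rfl, traceIndep_iff.mpr fun a ha b hb => ?_, by simpa using hc⟩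
    rw [content_of, Multiset.mem_singleton] at ha
    exact ha ▸ hx b (by simpa using hb)
  · obtain ⟨rfl, rfl⟩ : y = x ∧ v₂ = m ++ z₂ := by simpa [eq_comm] using hm
    exact .inl ⟨ofList (v₁ ++ m), ofList_append_cons_of_indep hx, by simpa [mul_assoc] using hc⟩

theorem levi (hsym : ∀ a b, I a b → I b a) {t₁ t₂ w₁ w₂ : Trace A I} (h : t₁ * t₂ = w₁ * w₂) :
    ∃ r₁ r₂ r₃ r₄, t₁ = r₁ * r₂ ∧ t₂ = r₃ * r₄ ∧ w₁ = r₁ * r₃ ∧ w₂ = r₂ * r₄ ∧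
      TraceIndep A I r₂ r₃ := by
  induction t₁ using induction_on generalizing w₁ w₂ with
  | one => exact ⟨1, 1, w₁, w₂, by simp, by simpa using h, by simp, by simp, traceIndep_one_left _⟩
  | of_mul x t ih =>
    rw [mul_assoc] at h
    rcases of_mul_eq_mul_cases hsym h with ⟨w₁', rfl, h'⟩ | ⟨w₂', rfl, hx, h'⟩
    · obtain ⟨r₁, r₂, r₃, r₄, rfl, rfl, rfl, rfl, hr⟩ := ih h'
      exact ⟨of x * r₁, r₂, r₃, r₄, (mul_assoc ..).symm, rfl, (mul_assoc ..).symm, rfl, hr⟩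
    · obtain ⟨r₁, r₂, r₃, r₄, rfl, rfl, rfl, rfl, hr⟩ := ih h'
      rw [traceIndep_mul_right] at hx
      refine ⟨r₁, of x * r₂, r₃, r₄, ?_, rfl, rfl, (mul_assoc ..).symm,
        traceIndep_mul_left.mpr ⟨hx.2, hr⟩⟩
      rw [← mul_assoc, hx.1.commute.eq, mul_assoc]

theorem content_subset_of_mul_eq_pow {r t u : Trace A I} {n : ℕ} (h : r * t = u ^ n) :
    content r ⊆ content u := fun a ha => by
  have : a ∈ content (u ^ n) := by rw [← h, content_mul]; exact Multiset.mem_add.mpr (.inl ha)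
  exact (Multiset.mem_nsmul.mp (by simpa using this)).2

theorem _root_.TraceConnected.exists_mem_content_not_mem {u r₁ r₃ s : Trace A I}
    (hconn : TraceConnected A I u) (hu : u = r₁ * r₃) (hr₁ : r₁ ≠ 1) (hr₃ : r₃ ≠ 1)
    (hs : TraceIndep A I s r₃) : ∃ a ∈ content r₁, a ∉ content s := by
  by_contra! hsub
  exact (hconn r₁ r₃ hu (hs.mono_left hsub)).elim hr₁ hr₃

theorem card_toFinset_content_lt_mul [DecidableEq A] {r s : Trace A I} {a : A}
    (ha : a ∈ content r) (has : a ∉ content s) :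
    (content s).toFinset.card < (content (r * s)).toFinset.card := by
  refine Finset.card_lt_card ?_
  rw [content_mul, Multiset.toFinset_add, Finset.ssubset_iff_of_subset Finset.subset_union_right]
  exact ⟨a, by simp [ha], by simpa using has⟩

theorem exists_pow_mul_of_mul_eq_pow [DecidableEq A] (hirr : ∀ a, ¬ I a a)
    (hsym : ∀ a b, I a b → I b a) {u : Trace A I} (hconn : TraceConnected A I u) (x : ℕ)
    {y₁ y₂ : Trace A I} (h : y₁ * y₂ = u ^ x) :
    ∃ (l k c : ℕ) (s p : Trace A I), y₁ = u ^ l * s ∧ y₂ = p * u ^ k ∧ s * p = u ^ c ∧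
      l + k + c = x ∧ c ≤ (content s).toFinset.card := by
  induction x generalizing y₁ y₂ with
  | zero =>
    have h₀ := congrArg content h
    simp only [content_mul, pow_zero, content_one, add_eq_zero, content_eq_zero] at h₀
    exact ⟨0, 0, 0, 1, 1, by simp [h₀.1], by simp [h₀.2], by simp, rfl, Nat.zero_le _⟩
  | succ x ih =>
    rw [pow_succ'] at h
    obtain ⟨r₁, r₂, r₃, r₄, rfl, rfl, hu, hr₂₄, hr⟩ := levi hsym h
    by_cases hr₃ : r₃ = 1
    · obtain ⟨l, k, c, s, p, rfl, rfl, hsp, rfl, hc⟩ := ih hr₂₄.symm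
      rw [hr₃, mul_one] at hu
      exact ⟨l + 1, k, c, s, p, by rw [hu, pow_succ', mul_assoc], by rw [hr₃, one_mul], hsp,
        by omega, hc⟩
    by_cases hr₁ : r₁ = 1
    · rw [hr₁, one_mul] at hu
      subst hu
      have hr₂ : r₂ = 1 :=
        (traceIndep_self hirr).mp (hr.mono_right (content_subset_of_mul_eq_pow hr₂₄.symm))
      rw [hr₂, one_mul] at hr₂₄
      exact ⟨0, x + 1, 0, 1, 1, by simp [hr₁, hr₂], by rw [← hr₂₄, pow_succ', one_mul], by simp,
        by omega, Nat.zero_le _⟩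
    obtain ⟨l, k, c, s, p, rfl, rfl, hsp, rfl, hc⟩ := ih hr₂₄.symm
    -- a positive power of `u` in `r₂` would share the letters of `r₃`
    obtain rfl : l = 0 := by
      by_contra hl
      refine hr₃ ((traceIndep_self hirr).mp (hr.mono_left fun a ha => ?_))
      have hau : a ∈ content u := by rw [hu, content_mul]; exact Multiset.mem_add.mpr (.inr ha)
      simp [hl, hau]
    rw [pow_zero, one_mul] at hr ⊢
    refine ⟨0, k, c + 1, r₁ * s, r₃ * p, by simp, by simp [mul_assoc], ?_, by omega, ?_⟩
    · calc r₁ * s * (r₃ * p) = r₁ * (s * r₃) * p := by simp only [mul_assoc]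
        _ = r₁ * r₃ * (s * p) := by rw [hr.commute.eq]; simp only [mul_assoc]
        _ = u ^ (c + 1) := by rw [← hu, hsp, pow_succ']
    · obtain ⟨a, ha₁, has⟩ := hconn.exists_mem_content_not_mem hu hr₁ hr₃ hr
      have := card_toFinset_content_lt_mul ha₁ has
      omega

end Trace

theorem power_factorization_two_general (A : Type) [Fintype A] (I : A → A → Prop)
    (hirr : ∀ a, ¬ I a a) (hsym : ∀ a b, I a b → I b a)
    (u : Trace A I) (hconn : TraceConnected A I u)
    (x : ℕ) (y₁ y₂ : Trace A I) :
    u ^ x = y₁ * y₂ ↔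
      ∃ (l k c : ℕ) (s p : Trace A I),
        y₁ = u ^ l * s ∧ y₂ = p * u ^ k ∧ s * p = u ^ c ∧
        l + k + c = x ∧ c ≤ Fintype.card A := by
  classical
  constructor
  · intro h
    obtain ⟨l, k, c, s, p, h₁, h₂, hsp, hx, hc⟩ :=
      Trace.exists_pow_mul_of_mul_eq_pow hirr hsym hconn x h.symm
    exact ⟨l, k, c, s, p, h₁, h₂, hsp, hx, hc.trans (Finset.card_le_univ _)⟩
  · rintro ⟨l, k, c, s, p, rfl, rfl, hsp, rfl, -⟩
    rw [show u ^ l * s * (p * u ^ k) = u ^ l * (s * p) * u ^ k by simp only [mul_assoc], hsp,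
      ← pow_add, ← pow_add, Nat.add_right_comm]

/-- Factorizations of a power of a connected trace into two factors. -/
theorem power_factorization_two (A : Type) [Fintype A] (I : A → A → Prop)
    (hirr : ∀ a, ¬ I a a) (hsym : ∀ a b, I a b → I b a)
    (u : Trace A I) (hu : u ≠ 1) (hconn : TraceConnected A I u)
    (x : ℕ) (y₁ y₂ : Trace A I) :
    u ^ x = y₁ * y₂ ↔
      ∃ (l k c : ℕ) (s p : Trace A I),
        y₁ = u ^ l * s ∧ y₂ = p * u ^ k ∧ s * p = u ^ c ∧
        l + k + c = x ∧ c ≤ Fintype.card A :=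
  power_factorization_two_general A I hirr hsym u hconn x y₁ y₂
end

section
/- For every nonempty connected trace u ∈ M(A,I), the partially commutative closure [u*]_I of the language of all words representing powers of u is regular; moreover there is a memorizing I-diamond NFA accepting it with at most 2·ρ(u)^{|A|} states, where ρ(u) is the number of prefixes of the trace u. -/
/-- A nondeterministic finite automaton with a single initial state. -/
structure NFA' (Q A : Type) where
  Δ : Q → A → Q → Prop
  q0 : Q
  F : Set Q

/-- `M.Reaches p w q`: the automaton can go from state p to state q reading w. -/
def NFA'.Reaches {Q A : Type} (M : NFA' Q A) : Q → List A → Q → Prop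
  | p, [], q => p = q
  | p, a :: w, q => ∃ r, M.Δ p a r ∧ M.Reaches r w q

/-- The language accepted by the NFA. -/
def NFA'.lang {Q A : Type} (M : NFA' Q A) : Set (List A) :=
  {w | ∃ q ∈ M.F, M.Reaches M.q0 w q}

/-- An I-diamond NFA. -/
def IDiamond {Q A : Type} (I : A → A → Prop) (M : NFA' Q A) : Prop :=
  ∀ a b p q r, I a b → M.Δ p a q → M.Δ q b r → ∃ q', M.Δ p b q' ∧ M.Δ q' a r

/-- A memorizing NFA: every state is reachable and determines the alphabet of
the words reaching it. -/
def Memorizing {Q A : Type} (M : NFA' Q A) : Prop :=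
  (∀ q : Q, ∃ w, M.Reaches M.q0 w q) ∧
  ∃ α : Q → Set A, ∀ (w : List A) (q : Q), M.Reaches M.q0 w q → α q = {a | a ∈ w}

/-- The partially commutative closure of a language. -/
def pcClosure (A : Type) (I : A → A → Prop) (L : Set (List A)) : Set (List A) :=
  {u | ∃ v ∈ L, traceCon A I (FreeMonoid.ofList u) (FreeMonoid.ofList v)}

/-!
Let `W` be a word representing `u`. By the projection lemma, a word is trace equivalent to `W ^ n`
iff it has the letter counts of `W ^ n` and, for each dependent pair `a, b`, the same projection
onto `{a, b}`, namely the prefix of the periodic word `(proj a b W) ^ ω` of that length. So a word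
extends to one equivalent to a power of `W` iff the count vector of each of its prefixes passes
this test on every dependent pair (`Alive`). The automaton keeps the count vector modulo full
copies of `W`, plus a flag recording whether a copy has been removed, and lets a letter through iff
the count vector stays alive. As aliveness is tested on dependent pairs only, and two independent
letters never lie in such a pair, the automaton is `I`-diamond; the state tells which letters have
been read.

For the size, connectedness of `u` makes the dependence graph on its letters connected. Along a
dependent pair the two counts are never a full period apart, and some letter is short of one copy
of `W`, so every letter is short of `|A|` copies. Cut into `|A|` layers of height `counts W`, the
count vector of a state has alive layers, each of them the count vector of a prefix of `u`. A state
is thus determined by its flag and `|A|` prefixes of `u`, which gives `2 ρ(u) ^ |A|` states.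
-/

namespace NFA'

variable {Q A : Type} (M : NFA' Q A)

lemma reaches_append {p r : Q} {u v : List A} :
    M.Reaches p (u ++ v) r ↔ ∃ q, M.Reaches p u q ∧ M.Reaches q v r := by
  induction u generalizing p with
  | nil => exact ⟨fun h => ⟨p, rfl, h⟩, fun ⟨_, hpq, h⟩ => hpq ▸ h⟩
  | cons a u ih =>
    simp only [List.cons_append, Reaches, ih]
    exact ⟨fun ⟨s, hs, q, hq, hr⟩ => ⟨q, ⟨s, hs, hq⟩, hr⟩,
      fun ⟨q, ⟨s, hs, hq⟩, hr⟩ => ⟨s, hs, q, hq, hr⟩⟩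

lemma reaches_concat {p r : Q} {v : List A} {a : A} :
    M.Reaches p (v ++ [a]) r ↔ ∃ q, M.Reaches p v q ∧ M.Δ q a r := by
  simp [reaches_append, Reaches]

def Reachable (q : Q) : Prop := ∃ w, M.Reaches M.q0 w q

lemma Reachable.of_step {p q : Q} {a : A} (hp : M.Reachable p) (h : M.Δ p a q) :
    M.Reachable q :=
  let ⟨w, hw⟩ := hp
  ⟨w ++ [a], (M.reaches_concat).mpr ⟨p, hw, h⟩⟩

def reachablePart : NFA' {q // M.Reachable q} A where
  Δ p a q := M.Δ p a q
  q0 := ⟨M.q0, [], rfl⟩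
  F := {q | q.1 ∈ M.F}

lemma reachablePart_reaches_iff {p q : {q // M.Reachable q}} {w : List A} :
    M.reachablePart.Reaches p w q ↔ M.Reaches p w q := by
  induction w generalizing p with
  | nil => exact Subtype.ext_iff
  | cons a w ih =>
    exact ⟨fun ⟨r, hr, h⟩ => ⟨r, hr, ih.mp h⟩,
      fun ⟨r, hr, h⟩ => ⟨⟨r, p.2.of_step M hr⟩, hr, ih.mpr h⟩⟩

lemma lang_reachablePart : M.reachablePart.lang = M.lang := by
  ext w
  exact ⟨fun ⟨q, hq, h⟩ => ⟨q, hq, (M.reachablePart_reaches_iff).mp h⟩,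
    fun ⟨q, hq, h⟩ =>
      ⟨⟨q, w, h⟩, hq, (M.reachablePart_reaches_iff (p := M.reachablePart.q0)).mpr h⟩⟩

lemma iDiamond_reachablePart (I : A → A → Prop)
    (h : ∀ a b p q r, M.Reachable p → I a b → M.Δ p a q → M.Δ q b r →
      ∃ q', M.Δ p b q' ∧ M.Δ q' a r) : IDiamond I M.reachablePart := by
  intro a b p q r hI hpq hqr
  obtain ⟨q', hpq', hq'r⟩ := h a b p q r p.2 hI hpq hqr
  exact ⟨⟨q', p.2.of_step M hpq'⟩, hpq', hq'r⟩

lemma memorizing_reachablePart (α : Q → Set A)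
    (h : ∀ w q, M.Reaches M.q0 w q → α q = {a | a ∈ w}) : Memorizing M.reachablePart := by
  refine ⟨fun q => ?_, fun q => α q.1, fun w q hw => h w q ((M.reachablePart_reaches_iff).mp hw)⟩
  obtain ⟨w, hw⟩ := q.2
  exact ⟨w, (M.reachablePart_reaches_iff (p := M.reachablePart.q0)).mpr hw⟩

end NFA'

namespace TraceStar

open List

variable {A : Type} {I : A → A → Prop}

/-! ### Trace equivalence of words -/

def TraceEquiv (I : A → A → Prop) (u v : List A) : Prop :=
  traceCon A I (FreeMonoid.ofList u) (FreeMonoid.ofList v)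

namespace TraceEquiv

variable {u u' v v' : List A}

lemma refl (u : List A) : TraceEquiv I u u := (traceCon A I).refl _

lemma trans {w : List A} (h : TraceEquiv I u v) (h' : TraceEquiv I v w) : TraceEquiv I u w :=
  (traceCon A I).trans h h'

lemma append (h : TraceEquiv I u u') (h' : TraceEquiv I v v') :
    TraceEquiv I (u ++ v) (u' ++ v') :=
  (traceCon A I).mul h h'

lemma cons (a : A) (h : TraceEquiv I u v) : TraceEquiv I (a :: u) (a :: v) :=
  append (refl [a]) h

lemma swap {a b : A} (h : I a b) (u : List A) : TraceEquiv I (a :: b :: u) (b :: a :: u) :=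
  append (ConGen.Rel.of _ _ ⟨a, b, h, rfl, rfl⟩ : TraceEquiv I [a, b] [b, a]) (refl u)

end TraceEquiv

lemma trc_ofList_eq_iff {u v : List A} :
    trc A I (FreeMonoid.ofList u) = trc A I (FreeMonoid.ofList v) ↔ TraceEquiv I u v :=
  Con.eq _

lemma trc_ofList_append (u v : List A) :
    trc A I (FreeMonoid.ofList (u ++ v)) =
      trc A I (FreeMonoid.ofList u) * trc A I (FreeMonoid.ofList v) :=
  map_mul (traceCon A I).mk' _ _

lemma perm_toList_of_traceCon {x y : FreeMonoid A} (h : traceCon A I x y) :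
    x.toList ~ y.toList := by
  induction h with
  | of x y hxy => obtain ⟨a, b, -, rfl, rfl⟩ := hxy; exact Perm.swap _ _ _
  | refl => exact Perm.refl _
  | symm _ ih => exact ih.symm
  | trans _ _ ih ih' => exact ih.trans ih'
  | mul _ _ ih ih' => exact ih.append ih'

lemma TraceEquiv.perm {u v : List A} (h : TraceEquiv I u v) : u ~ v :=
  perm_toList_of_traceCon h

lemma trc_ofList_eq_one_iff {u : List A} : trc A I (FreeMonoid.ofList u) = 1 ↔ u = [] := by
  refine ⟨fun h => ?_, fun h => h ▸ rfl⟩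
  have : TraceEquiv I u [] := trc_ofList_eq_iff.mp h
  exact List.eq_nil_of_length_eq_zero this.perm.length_eq

lemma traceEquiv_cons_append {a : A} {s : List A} (hs : ∀ x ∈ s, I a x) (t : List A) :
    TraceEquiv I (a :: (s ++ t)) (s ++ a :: t) := by
  induction s with
  | nil => exact .refl _
  | cons b s ih =>
    exact (TraceEquiv.swap (hs b mem_cons_self) _).trans
      (.cons b (ih fun x hx => hs x (mem_cons_of_mem b hx)))

lemma traceEquiv_filter_append (p : A → Bool) :
    ∀ {l : List A}, (∀ x ∈ l, ∀ y ∈ l, p x = false → p y = true → I x y) →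
      TraceEquiv I l (l.filter p ++ l.filter (fun x => !p x))
  | [], _ => .refl []
  | a :: t, h => by
    have ih := traceEquiv_filter_append p (l := t)
      fun x hx y hy => h x (mem_cons_of_mem a hx) y (mem_cons_of_mem a hy)
    cases ha : p a with
    | true => simpa [filter_cons, ha] using ih.cons a
    | false =>
      have hcomm : ∀ y ∈ t.filter p, I a y := fun y hy =>
        h a mem_cons_self y (mem_cons_of_mem a (mem_of_mem_filter hy)) ha (mem_filter.mp hy).2
      simpa [filter_cons, ha] using (ih.cons a).trans (traceEquiv_cons_append hcomm _)

lemma trc_mem_tracePrefixes {l u z : List A} (h : TraceEquiv I l (u ++ z)) :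
    trc A I (FreeMonoid.ofList u) ∈ tracePrefixes A I (trc A I (FreeMonoid.ofList l)) :=
  ⟨trc A I (FreeMonoid.ofList z), by rw [trc_ofList_eq_iff.mpr h, trc_ofList_append]⟩

lemma tracePrefixes_finite [Finite A] (t : Trace A I) : (tracePrefixes A I t).Finite := by
  obtain ⟨w, rfl⟩ := Con.mk'_surjective t
  refine ((List.finite_length_le A w.toList.length).image
    fun u => trc A I (FreeMonoid.ofList u)).subset ?_
  rintro p ⟨s, hs⟩
  obtain ⟨x, rfl⟩ := Con.mk'_surjective p
  obtain ⟨y, rfl⟩ := Con.mk'_surjective s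
  refine ⟨x.toList, ?_, rfl⟩
  have hperm := perm_toList_of_traceCon ((Con.eq _).mp (hs.trans (map_mul _ x y).symm))
  simp [hperm.length_eq]

/-- The dependence graph restricted to the letters of `W` is connected. -/
def DependencyConnected (I : A → A → Prop) (W : List A) : Prop :=
  ∀ B : Set A, (∃ a ∈ W, a ∈ B) → (∃ b ∈ W, b ∉ B) → ∃ a ∈ W, ∃ b ∈ W, a ∈ B ∧ b ∉ B ∧ ¬ I a b

theorem dependencyConnected_of_traceConnected (hsym : ∀ a b, I a b → I b a) {W : List A}
    (h : TraceConnected A I (trc A I (FreeMonoid.ofList W))) : DependencyConnected I W := by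
  classical
  rintro B ⟨a, haW, haB⟩ ⟨b, hbW, hbB⟩
  by_contra hcon
  push Not at hcon
  set p : A → Bool := fun x => decide (x ∈ B)
  have hsplit : TraceEquiv I W (W.filter p ++ W.filter (fun x => !p x)) :=
    traceEquiv_filter_append p fun x hx y hy hpx hpy =>
      hsym _ _ (hcon y hy x hx (by simpa [p] using hpy) (by simpa [p] using hpx))
  have hfact : trc A I (FreeMonoid.ofList W) = trc A I (FreeMonoid.ofList (W.filter p)) *
      trc A I (FreeMonoid.ofList (W.filter fun x => !p x)) := by
    rw [trc_ofList_eq_iff.mpr hsplit, trc_ofList_append]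
  have hindep : TraceIndep A I (trc A I (FreeMonoid.ofList (W.filter p)))
      (trc A I (FreeMonoid.ofList (W.filter fun x => !p x))) := by
    intro w₁ w₂ h₁ h₂ x hx y hy
    have hx' := (trc_ofList_eq_iff.mp h₁).perm.mem_iff.mpr hx
    have hy' := (trc_ofList_eq_iff.mp h₂).perm.mem_iff.mpr hy
    simp only [mem_filter, p, decide_eq_true_eq, Bool.not_eq_true', decide_eq_false_iff_not]
      at hx' hy'
    exact hcon x hx'.1 y hy'.1 hx'.2 hy'.2
  rcases h _ _ hfact hindep with h₁ | h₁ <;> rw [trc_ofList_eq_one_iff] at h₁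
  · exact eq_nil_iff_forall_not_mem.mp h₁ a (mem_filter.mpr ⟨haW, by simpa [p] using haB⟩)
  · exact eq_nil_iff_forall_not_mem.mp h₁ b (mem_filter.mpr ⟨hbW, by simpa [p] using hbB⟩)

/-! ### Periodic words -/

section Periodic

def npow (X : List A) (n : ℕ) : List A := (replicate n X).flatten

/-- The prefix of length `L` of the periodic word `X X X ⋯` (empty if `X` is). -/
def cycTake (X : List A) (L : ℕ) : List A := (npow X L).take L

variable {X : List A} {K L m n : ℕ}

@[simp] lemma npow_zero (X : List A) : npow X 0 = [] := rfl

lemma npow_succ (X : List A) (n : ℕ) : npow X (n + 1) = X ++ npow X n := by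
  simp [npow, replicate_succ]

lemma npow_add (X : List A) (m n : ℕ) : npow X (m + n) = npow X m ++ npow X n := by
  rw [npow, replicate_add, flatten_append]; rfl

@[simp] lemma npow_one (X : List A) : npow X 1 = X := by simp [npow]

@[simp] lemma nil_npow (n : ℕ) : npow ([] : List A) n = [] := by simp [npow]

@[simp] lemma length_npow (X : List A) (n : ℕ) : (npow X n).length = n * X.length := by
  induction n with
  | zero => simp
  | succ n ih => rw [npow_succ, length_append, ih]; ring

lemma mem_of_mem_npow {e : A} (h : e ∈ npow X n) : e ∈ X := by
  obtain ⟨l, hl, he⟩ := mem_flatten.mp h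
  rwa [eq_of_mem_replicate hl] at he

lemma take_npow_of_le (hL : L ≤ m * X.length) (hmn : m ≤ n) :
    (npow X n).take L = (npow X m).take L := by
  obtain ⟨k, rfl⟩ := Nat.exists_eq_add_of_le hmn
  rw [npow_add, take_append_of_le_length (by simpa using hL)]

lemma cycTake_eq_take (h : L ≤ n * X.length) : cycTake X L = (npow X n).take L := by
  rcases eq_or_ne X [] with rfl | hX
  · simp [cycTake]
  rcases le_total n L with hnL | hLn
  · exact take_npow_of_le h hnL
  · exact (take_npow_of_le (Nat.le_mul_of_pos_right L (length_pos_iff.mpr hX)) hLn).symm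

@[simp] lemma cycTake_zero (X : List A) : cycTake X 0 = [] := rfl

@[simp] lemma nil_cycTake (L : ℕ) : cycTake ([] : List A) L = [] := by simp [cycTake]

lemma cycTake_of_le_length (h : L ≤ X.length) : cycTake X L = X.take L := by
  rw [cycTake_eq_take (n := 1) (by simpa using h), npow_one]

lemma cycTake_mul_length_add (X : List A) (n L : ℕ) :
    cycTake X (n * X.length + L) = npow X n ++ cycTake X L := by
  rcases eq_or_ne X [] with rfl | hX
  · simp
  have hL : L ≤ L * X.length := Nat.le_mul_of_pos_right L (length_pos_iff.mpr hX)
  rw [cycTake_eq_take (n := n + L) (by rw [Nat.add_mul]; omega), npow_add,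
    ← length_npow X n, take_length_add_append, cycTake_eq_take hL]

lemma cycTake_mul_length (X : List A) (n : ℕ) : cycTake X (n * X.length) = npow X n := by
  simpa using cycTake_mul_length_add X n 0

lemma length_cycTake (hX : X ≠ []) (L : ℕ) : (cycTake X L).length = L := by
  have := Nat.le_mul_of_pos_right L (length_pos_iff.mpr hX)
  rw [cycTake, length_take, length_npow]
  omega

lemma take_cycTake (h : K ≤ L) : (cycTake X L).take K = cycTake X K := by
  rcases eq_or_ne X [] with rfl | hX
  · simp
  rw [cycTake, take_take, min_eq_left h, cycTake_eq_take]
  exact (Nat.le_mul_of_pos_right K (length_pos_iff.mpr hX)).trans (Nat.mul_le_mul_right _ h)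

lemma cycTake_prefix (h : K ≤ L) : cycTake X K <+: cycTake X L :=
  take_cycTake h ▸ take_prefix K _

lemma exists_cycTake_succ (hX : X ≠ []) (L : ℕ) : ∃ e, cycTake X (L + 1) = cycTake X L ++ [e] := by
  have hlen := length_cycTake hX (L + 1)
  have h := take_add_one (l := cycTake X (L + 1)) (i := L)
  rw [take_of_length_le hlen.le, take_cycTake (Nat.le_succ L),
    getElem?_eq_getElem (by omega)] at h
  exact ⟨_, h⟩

lemma ofList_npow (X : List A) (n : ℕ) :
    FreeMonoid.ofList (npow X n) = FreeMonoid.ofList X ^ n := by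
  induction n with
  | zero => rfl
  | succ n ih => rw [npow_succ, FreeMonoid.ofList_append, ih, pow_succ']

lemma mem_of_mem_cycTake {e : A} (h : e ∈ cycTake X L) : e ∈ X :=
  mem_of_mem_npow (mem_of_mem_take h)

end Periodic

variable [DecidableEq A]

/-! ### Projections onto dependent pairs -/

def proj (a b : A) (l : List A) : List A := l.filter (fun e => e = a ∨ e = b)

section Projection

variable {a b : A}

@[simp] lemma proj_nil : proj a b ([] : List A) = [] := rfl

lemma proj_append (l l' : List A) : proj a b (l ++ l') = proj a b l ++ proj a b l' :=
  filter_append ..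

lemma proj_cons_of_mem {x : A} (h : x = a ∨ x = b) (l : List A) :
    proj a b (x :: l) = x :: proj a b l := by
  simp [proj, h]

lemma proj_cons_of_not_mem {x : A} (h : ¬ (x = a ∨ x = b)) (l : List A) :
    proj a b (x :: l) = proj a b l := by
  simp [proj, h]

lemma mem_proj {x : A} {l : List A} : x ∈ proj a b l ↔ x ∈ l ∧ (x = a ∨ x = b) := by
  simp [proj]

lemma count_proj_left (a b : A) (l : List A) : (proj a b l).count a = l.count a :=
  count_filter (by simp)

lemma count_proj_right (a b : A) (l : List A) : (proj a b l).count b = l.count b :=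
  count_filter (by simp)

lemma count_add_count_of_forall_mem {l : List A} (hab : a ≠ b) (h : ∀ x ∈ l, x = a ∨ x = b) :
    l.count a + l.count b = l.length := by
  induction l with
  | nil => rfl
  | cons x l ih =>
    have ih := ih fun y hy => h y (mem_cons_of_mem x hy)
    rcases h x mem_cons_self with rfl | rfl
    · rw [count_cons_self, count_cons_of_ne hab, length_cons]; omega
    · rw [count_cons_self, count_cons_of_ne hab.symm, length_cons]; omega

lemma length_proj (hab : a ≠ b) (l : List A) : (proj a b l).length = l.count a + l.count b := by
  rw [← count_add_count_of_forall_mem hab fun x hx => (mem_proj.mp hx).2,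
    count_proj_left, count_proj_right]

lemma proj_eq_of_traceCon (hab : ¬ I a b) (hba : ¬ I b a) {x y : FreeMonoid A}
    (h : traceCon A I x y) : proj a b x.toList = proj a b y.toList := by
  induction h with
  | of x y hxy =>
    obtain ⟨c, d, hcd, rfl, rfl⟩ := hxy
    show proj a b [c, d] = proj a b [d, c]
    by_cases hc : c = a ∨ c = b <;> by_cases hd : d = a ∨ d = b <;> simp [proj, hc, hd]
    rcases hc with rfl | rfl <;> rcases hd with rfl | rfl <;> simp_all
  | refl => rfl
  | symm _ ih => exact ih.symm
  | trans _ _ ih ih' => exact ih.trans ih'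
  | mul _ _ ih ih' =>
    exact (proj_append _ _).trans ((congrArg₂ _ ih ih').trans (proj_append _ _).symm)

lemma TraceEquiv.proj_eq (hsym : ∀ a b, I a b → I b a) {u v : List A} (h : TraceEquiv I u v)
    (hab : ¬ I a b) : proj a b u = proj a b v :=
  proj_eq_of_traceCon hab (fun h' => hab (hsym _ _ h')) h

end Projection

lemma exists_eq_append_cons_not_mem {a : A} {l : List A} (h : a ∈ l) :
    ∃ s t, l = s ++ a :: t ∧ a ∉ s := by
  induction l with
  | nil => simp at h
  | cons x l ih =>
    by_cases hx : x = a
    · exact ⟨[], l, by rw [hx]; rfl, not_mem_nil⟩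
    · obtain ⟨s, t, rfl, hs⟩ := ih ((mem_cons.mp h).resolve_left (Ne.symm hx))
      exact ⟨x :: s, t, rfl, by simp [Ne.symm hx, hs]⟩

-- A letter `c` of `s` dependent on `a` would make the projections onto `a, c` start with `a` on
-- the left and with `c` on the right.
lemma forall_indep_of_proj_eq {a : A} {s t t' : List A} (has : a ∉ s)
    (h : ∀ c, a ≠ c → ¬ I a c → proj a c (a :: t) = proj a c (s ++ a :: t')) :
    ∀ c ∈ s, I a c := by
  intro c hc
  by_contra hI
  have hac : a ≠ c := fun h => has (h ▸ hc)
  have h := h c hac hI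
  rw [proj_cons_of_mem (.inl rfl), proj_append, proj_cons_of_mem (.inl rfl)] at h
  cases hps : proj a c s with
  | nil => exact eq_nil_iff_forall_not_mem.mp hps c (mem_proj.mpr ⟨hc, .inr rfl⟩)
  | cons e r =>
    rw [hps, cons_append, cons.injEq] at h
    have hmem : a ∈ proj a c s := by rw [hps, h.1]; exact mem_cons_self
    exact has (mem_proj.mp hmem).1

lemma proj_eq_of_proj_cons_eq (hsym : ∀ a b, I a b → I b a) {a x y : A} {s t t' : List A}
    (has : a ∉ s) (hs : ∀ c ∈ s, I a c) (hI : ¬ I x y)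
    (h : proj x y (a :: t) = proj x y (s ++ a :: t')) : proj x y t = proj x y (s ++ t') := by
  by_cases hax : a = x ∨ a = y
  · have hs0 : proj x y s = [] := by
      refine eq_nil_iff_forall_not_mem.mpr fun e he => ?_
      obtain ⟨hes, hexy⟩ := mem_proj.mp he
      have hae := hs e hes
      rcases hax with rfl | rfl <;> rcases hexy with rfl | rfl
      exacts [has hes, hI hae, hI (hsym _ _ hae), has hes]
    rw [proj_cons_of_mem hax, proj_append, hs0, nil_append, proj_cons_of_mem hax,
      cons.injEq] at h
    rw [proj_append, hs0, nil_append, h.2]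
  · rwa [proj_cons_of_not_mem hax, proj_append, proj_cons_of_not_mem hax, ← proj_append] at h

/-- The projection lemma of trace theory. -/
theorem traceEquiv_of_count_eq_of_proj_eq (hsym : ∀ a b, I a b → I b a) :
    ∀ {u v : List A}, (∀ a, u.count a = v.count a) →
      (∀ a b, a ≠ b → ¬ I a b → proj a b u = proj a b v) → TraceEquiv I u v
  | [], v, hcount, _ => by
    obtain rfl : v = [] := eq_nil_iff_forall_not_mem.mpr fun e he => by
      simpa [← hcount] using count_pos_iff.mpr he
    exact .refl []
  | a :: t, v, hcount, hproj => by
    obtain ⟨s, t', rfl, has⟩ :=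
      exists_eq_append_cons_not_mem (a := a) (l := v) (count_pos_iff.mp (by rw [← hcount]; simp))
    have hs := forall_indep_of_proj_eq has (hproj a)
    refine .trans (.cons a (traceEquiv_of_count_eq_of_proj_eq hsym (v := s ++ t') (fun x => ?_)
      fun x y hxy hI => proj_eq_of_proj_cons_eq hsym has hs hI (hproj x y hxy hI)))
      (traceEquiv_cons_append hs t')
    have := hcount x
    simp only [count_cons, count_append] at this ⊢
    omega

/-! ### Count vectors of prefixes -/

def counts (l : List A) : A → ℕ := fun a => l.count a

@[simp] lemma counts_apply (l : List A) (a : A) : counts l a = l.count a := rfl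

@[simp] lemma counts_nil : counts ([] : List A) = 0 := rfl

lemma counts_append (l l' : List A) : counts (l ++ l') = counts l + counts l' :=
  funext fun _ => count_append ..

lemma counts_cons (a : A) (l : List A) : counts (a :: l) = counts l + Pi.single a 1 :=
  funext fun x => by
    rcases eq_or_ne x a with rfl | hx
    · simp
    · simp [hx, hx.symm]

lemma counts_concat (l : List A) (a : A) : counts (l ++ [a]) = counts l + Pi.single a 1 := by
  rw [counts_append, counts_cons a [], counts_nil, zero_add]

lemma TraceEquiv.counts_eq {u v : List A} (h : TraceEquiv I u v) : counts u = counts v :=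
  funext h.perm.count_eq

def PrefixCountsOnPairs (I : A → A → Prop) (l : List A) (g : A → ℕ) : Prop :=
  ∀ a b, a ≠ b → ¬ I a b → ((proj a b l).take (g a + g b)).count a = g a

namespace PrefixCountsOnPairs

variable {a : A} {t : List A} {g : A → ℕ}

lemma indep_of_eq_zero (h : PrefixCountsOnPairs I (a :: t) g) (ha : g a = 0) {b : A}
    (hb : 0 < g b) : I a b := by
  by_contra hI
  have h' := h a b (by rintro rfl; omega) hI
  rw [proj_cons_of_mem (.inl rfl), ha, zero_add, ← Nat.succ_pred_eq_of_pos hb, take_succ_cons,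
    count_cons_self] at h'
  omega

lemma tail_of_eq_zero (hsym : ∀ a b, I a b → I b a) (h : PrefixCountsOnPairs I (a :: t) g)
    (ha : g a = 0) : PrefixCountsOnPairs I t g := by
  intro x y hxy hI
  by_cases hax : a = x ∨ a = y
  · have hxy0 : g x = 0 ∧ g y = 0 := by
      rcases hax with rfl | rfl
      · exact ⟨ha, Nat.eq_zero_of_not_pos fun hy => hI (h.indep_of_eq_zero ha hy)⟩
      · exact ⟨Nat.eq_zero_of_not_pos fun hx => hI (hsym _ _ (h.indep_of_eq_zero ha hx)), ha⟩
    simp [hxy0]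
  · simpa [proj_cons_of_not_mem hax] using h x y hxy hI

lemma tail_of_pos (h : PrefixCountsOnPairs I (a :: t) g) (ha : 0 < g a) :
    PrefixCountsOnPairs I t (g - Pi.single a 1) := by
  intro x y hxy hI
  have h' := h x y hxy hI
  by_cases hax : a = x ∨ a = y
  · rw [proj_cons_of_mem hax] at h'
    rcases hax with rfl | rfl
    · rw [show g a + g y = (g a - 1 + g y) + 1 by omega, take_succ_cons, count_cons_self] at h'
      simp only [Pi.sub_apply, Pi.single_eq_same, Pi.single_eq_of_ne hxy.symm, tsub_zero]
      omega
    · rw [show g x + g a = (g x + (g a - 1)) + 1 by omega, take_succ_cons,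
        count_cons_of_ne hxy.symm] at h'
      simpa [Pi.single_apply, hxy] using h'
  · rw [proj_cons_of_not_mem hax] at h'
    rw [not_or] at hax
    simpa [Pi.single_apply, Ne.symm hax.1, Ne.symm hax.2] using h'

end PrefixCountsOnPairs

theorem exists_traceEquiv_append_counts (hsym : ∀ a b, I a b → I b a) :
    ∀ {l : List A} {g : A → ℕ}, g ≤ counts l → PrefixCountsOnPairs I l g →
      ∃ u z, TraceEquiv I l (u ++ z) ∧ counts u = g
  | [], g, hle, _ => ⟨[], [], .refl [], funext fun a => (Nat.le_zero.mp (hle a)).symm⟩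
  | a :: t, g, hle, h => by
    by_cases ha : 0 < g a
    · have hle' : g - Pi.single a 1 ≤ counts t := fun x => by
        have := hle x
        simp only [counts_cons, Pi.add_apply, Pi.sub_apply, Pi.single_apply] at this ⊢
        split_ifs at this ⊢ <;> omega
      obtain ⟨u, z, htz, hu⟩ := exists_traceEquiv_append_counts hsym hle' (h.tail_of_pos ha)
      refine ⟨a :: u, z, htz.cons a, ?_⟩
      funext x
      have := congrFun hu x
      rcases eq_or_ne x a with rfl | hx
      · simp only [counts_apply, Pi.sub_apply, Pi.single_eq_same, count_cons_self] at this ⊢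
        omega
      · simpa [count_cons, hx, hx.symm] using this
    · have ha0 : g a = 0 := by omega
      have hle' : g ≤ counts t := fun x => by
        have := hle x
        rcases eq_or_ne x a with rfl | hx
        · simp [ha0]
        · simpa [count_cons, hx, hx.symm] using this
      obtain ⟨u, z, htz, hu⟩ :=
        exists_traceEquiv_append_counts hsym hle' (h.tail_of_eq_zero hsym ha0)
      have hcomm : ∀ x ∈ u, I a x := fun x hx =>
        h.indep_of_eq_zero ha0 (hu ▸ count_pos_iff.mpr hx)
      exact ⟨u, a :: z, (htz.cons a).trans (traceEquiv_cons_append hcomm z), hu⟩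

section Counting

variable {X : List A} {K L : ℕ}

lemma counts_npow (X : List A) (n : ℕ) : counts (npow X n) = n • counts X := by
  induction n with
  | zero => simp
  | succ n ih => rw [npow_succ, counts_append, ih, succ_nsmul']

lemma count_npow (a : A) (X : List A) (n : ℕ) : (npow X n).count a = n * X.count a := by
  simpa using congrFun (counts_npow X n) a

lemma proj_npow (a b : A) (X : List A) (n : ℕ) : proj a b (npow X n) = npow (proj a b X) n := by
  simp [npow, proj, filter_flatten, map_replicate]

lemma count_cycTake_mul_length_add (a : A) (X : List A) (n L : ℕ) :
    (cycTake X (n * X.length + L)).count a = n * X.count a + (cycTake X L).count a := by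
  rw [cycTake_mul_length_add, count_append, count_npow]

lemma count_cycTake_le (h : L ≤ X.length) (a : A) : (cycTake X L).count a ≤ X.count a := by
  rw [cycTake_of_le_length h]
  exact (take_sublist L X).count_le a

lemma count_cycTake_mono (h : K ≤ L) (a : A) : (cycTake X K).count a ≤ (cycTake X L).count a :=
  (cycTake_prefix h).count_le a

lemma min_count_cycTake_sub (a : A) (X : List A) (L i : ℕ) :
    min (X.count a) ((cycTake X L).count a - i * X.count a) =
      (cycTake X (min X.length (L - i * X.length))).count a := by
  rcases le_total L (i * X.length) with hL | hL
  · have := count_cycTake_mono (X := X) hL a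
    rw [cycTake_mul_length, count_npow] at this
    simp [Nat.sub_eq_zero_of_le hL, Nat.sub_eq_zero_of_le this]
  · obtain ⟨s, rfl⟩ := Nat.exists_eq_add_of_le hL
    rw [count_cycTake_mul_length_add, Nat.add_sub_cancel_left, Nat.add_sub_cancel_left]
    rcases le_total s X.length with hs | hs
    · rw [min_eq_right hs, min_eq_right (count_cycTake_le hs a)]
    · have hX : cycTake X X.length = X := by rw [cycTake_of_le_length le_rfl, take_length]
      have := count_cycTake_mono (X := X) hs a
      rw [hX] at this
      rw [min_eq_left hs, min_eq_left this, hX]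

lemma count_add_count_cycTake_proj {a b : A} (hab : a ≠ b) {W : List A} (hX : proj a b W ≠ [])
    (L : ℕ) : (cycTake (proj a b W) L).count a + (cycTake (proj a b W) L).count b = L := by
  rw [count_add_count_of_forall_mem hab fun x hx => (mem_proj.mp (mem_of_mem_cycTake hx)).2,
    length_cycTake hX]

end Counting

/-! ### Alive count vectors -/

/-- `c` is the letter-count vector of a prefix of a power of `W`, as far as this can be seen on
single dependent pairs of letters. -/
def Alive (I : A → A → Prop) (W : List A) (c : A → ℕ) : Prop :=
  (∀ a, a ∉ W → c a = 0) ∧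
  ∀ a b, a ≠ b → ¬ I a b → (cycTake (proj a b W) (c a + c b)).count a = c a

section Alive

variable {W : List A} {c f : A → ℕ} {a b : A}

lemma alive_zero : Alive I W 0 := ⟨fun _ _ => rfl, fun _ _ _ _ => by simp⟩

lemma Alive.count_cycTake (h : Alive I W c) (hab : a ≠ b) (hI : ¬ I a b) {x : A}
    (hx : x = a ∨ x = b) : (cycTake (proj a b W) (c a + c b)).count x = c x := by
  rcases hx with rfl | rfl
  · exact h.2 x b hab hI
  rcases eq_or_ne (proj a x W) [] with hX | hX
  · have hxW : x ∉ W := fun hx => by simpa [hX] using (mem_proj (a := a)).mpr ⟨hx, .inr rfl⟩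
    simp [hX, h.1 x hxW]
  · have := count_add_count_cycTake_proj hab hX (c a + c x)
    rw [h.2 a x hab hI] at this
    omega

lemma alive_add_nsmul_counts_iff (n : ℕ) : Alive I W (c + n • counts W) ↔ Alive I W c := by
  refine and_congr (forall_congr' fun a => ?_) (forall₂_congr fun a b => ?_)
  · exact imp_congr_right fun ha => by simp [count_eq_zero_of_not_mem ha]
  · refine forall₂_congr fun hab _ => ?_
    have hL : (c + n • counts W) a + (c + n • counts W) b =
        n * (proj a b W).length + (c a + c b) := by
      simp only [Pi.add_apply, Pi.smul_apply, smul_eq_mul, counts_apply, length_proj hab]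
      ring
    rw [hL, count_cycTake_mul_length_add, count_proj_left]
    simp only [Pi.add_apply, Pi.smul_apply, counts_apply, smul_eq_mul]
    omega

lemma Alive.add_single_of_indep (hsym : ∀ a b, I a b → I b a) (hab : a ≠ b) (hIab : I a b)
    (h : Alive I W c) (h' : Alive I W (c + Pi.single a 1 + Pi.single b 1)) :
    Alive I W (c + Pi.single b 1) := by
  refine ⟨fun x hx => ?_, fun x y hxy hI => ?_⟩
  · have := h'.1 x hx
    simp only [Pi.add_apply, Pi.single_apply] at this ⊢
    split_ifs at this ⊢
    omega
  by_cases hb : b = x ∨ b = y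
  · -- the pair `x, y` is dependent, so it does not contain `a`
    have hax : a ≠ x := by
      rintro rfl
      rcases hb with rfl | rfl
      exacts [hab rfl, hI hIab]
    have hay : a ≠ y := by
      rintro rfl
      rcases hb with rfl | rfl
      exacts [hI (hsym _ _ hIab), hab rfl]
    simpa [Pi.single_apply, hax.symm, hay.symm] using h'.2 x y hxy hI
  · rw [not_or] at hb
    simpa [Pi.single_apply, Ne.symm hb.1, Ne.symm hb.2] using h.2 x y hxy hI

end Alive

section Words

variable {W : List A}

lemma alive_counts_of_prefix (hsym : ∀ a b, I a b → I b a) {u v : List A} {n : ℕ}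
    (hv : TraceEquiv I v (npow W n)) (hu : u <+: v) : Alive I W (counts u) := by
  have hcount := hv.counts_eq
  refine ⟨fun a ha => ?_, fun a b hab hI => ?_⟩
  · have := hu.count_le a
    rw [← counts_apply v, hcount, counts_apply, count_npow, count_eq_zero_of_not_mem ha] at this
    simpa using this
  · have hpre : proj a b u <+: npow (proj a b W) n := by
      rw [← proj_npow, ← hv.proj_eq hsym hI]
      exact hu.filter _
    have hlen := hpre.length_le
    rw [length_npow] at hlen
    rw [counts_apply, counts_apply, ← length_proj hab, cycTake_eq_take hlen,
      ← prefix_iff_eq_take.mp hpre, count_proj_left]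

lemma proj_eq_cycTake_of_forall_prefix_alive {v : List A}
    (h : ∀ u, u <+: v → Alive I W (counts u)) {x y : A} (hxy : x ≠ y) (hI : ¬ I x y) :
    proj x y v = cycTake (proj x y W) (v.count x + v.count y) := by
  induction v using reverseRecOn with
  | nil => simp
  | append_singleton v a ih =>
    have hv := ih fun u hu => h u (hu.trans (prefix_append v [a]))
    have hva := h _ prefix_rfl
    have hv0 := h v (prefix_append v [a])
    by_cases ha : a = x ∨ a = y
    · have haW : a ∈ W := by_contra fun haW => by simpa using hva.1 a haW
      have hX : proj x y W ≠ [] := ne_nil_of_mem (mem_proj.mpr ⟨haW, ha⟩)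
      have hL : (v ++ [a]).count x + (v ++ [a]).count y = v.count x + v.count y + 1 := by
        rcases ha with rfl | rfl
        · rw [count_append, count_append, count_singleton_self, count_cons_of_ne hxy, count_nil]
          omega
        · rw [count_append, count_append, count_singleton_self, count_cons_of_ne hxy.symm,
            count_nil]
          omega
      obtain ⟨e, he⟩ := exists_cycTake_succ hX (v.count x + v.count y)
      -- the next letter of the periodic projection is the one whose count went up
      have hea : e = a := by
        have h1 := hva.count_cycTake hxy hI ha
        have h0 := hv0.count_cycTake hxy hI ha
        simp only [counts_apply] at h1 h0
        rw [hL, he, count_append, h0, count_append, count_singleton, count_singleton] at h1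
        simpa using h1
      rw [proj_append, hv, hL, he, hea]
      simp [proj, ha]
    · rw [proj_append, hv]
      rw [not_or] at ha
      simp [proj, ha]

theorem traceEquiv_npow_of_forall_prefix_alive (hsym : ∀ a b, I a b → I b a) {v : List A}
    (h : ∀ u, u <+: v → Alive I W (counts u)) {n : ℕ} (hn : counts v = n • counts W) :
    TraceEquiv I v (npow W n) := by
  have hcount (a : A) : v.count a = n * W.count a := by simpa using congrFun hn a
  refine traceEquiv_of_count_eq_of_proj_eq hsym (fun a => by rw [hcount, count_npow])
    fun x y hxy hI => ?_
  rw [proj_eq_cycTake_of_forall_prefix_alive h hxy hI, proj_npow, ← cycTake_mul_length,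
    length_proj hxy, hcount, hcount, Nat.mul_add]

end Words

section Layers

variable {W : List A} {f : A → ℕ}

def layer (W : List A) (f : A → ℕ) (i : ℕ) : A → ℕ :=
  fun a => min (W.count a) (f a - i * W.count a)

lemma layer_le_counts (i : ℕ) : layer W f i ≤ counts W := fun _ => min_le_left _ _

lemma sum_range_min_sub_mul {c : ℕ} : ∀ {K x : ℕ}, x ≤ K * c →
    ∑ i ∈ Finset.range K, min c (x - i * c) = x
  | 0, x, h => by simp_all
  | K + 1, x, h => by
    have ih := sum_range_min_sub_mul (c := c) (K := K) (x := x - c)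
      (by rw [Nat.succ_mul] at h; omega)
    have hshift (i : ℕ) : x - (i + 1) * c = x - c - i * c := by
      rw [Nat.sub_sub, Nat.succ_mul, add_comm]
    simp only [Finset.sum_range_succ', hshift, ih, zero_mul, Nat.sub_zero]
    omega

lemma sum_layer {K : ℕ} (h : f ≤ K • counts W) : ∑ i ∈ Finset.range K, layer W f i = f :=
  funext fun a => by
    simpa [layer, Finset.sum_apply] using sum_range_min_sub_mul (by simpa using h a)

lemma alive_layer (h : Alive I W f) (i : ℕ) : Alive I W (layer W f i) := by
  refine ⟨fun a ha => by simp [layer, count_eq_zero_of_not_mem ha], fun a b hab hI => ?_⟩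
  set X := proj a b W
  rcases eq_or_ne X [] with hX | hX
  · have haW : a ∉ W := fun haW => by simpa [X, hX] using (mem_proj (b := b)).mpr ⟨haW, .inl rfl⟩
    simp [layer, hX, count_eq_zero_of_not_mem haW]
  -- both layers are read off the same window of the periodic projection
  set L' := min X.length (f a + f b - i * X.length)
  have hlayer : ∀ x, x = a ∨ x = b → layer W f i x = (cycTake X L').count x := by
    intro x hx
    have hcx : X.count x = W.count x := by
      rcases hx with rfl | rfl
      exacts [count_proj_left _ _ _, count_proj_right _ _ _]
    rw [layer, ← h.count_cycTake hab hI hx, ← hcx, min_count_cycTake_sub]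
  rw [hlayer a (.inl rfl), hlayer b (.inr rfl), count_add_count_cycTake_proj hab hX]

lemma Alive.prefixCountsOnPairs (h : Alive I W f) (hf : f ≤ counts W) :
    PrefixCountsOnPairs I W f := fun a b hab hI => by
  have hle : f a + f b ≤ (proj a b W).length := by
    rw [length_proj hab]
    exact add_le_add (hf a) (hf b)
  rw [← cycTake_of_le_length hle]
  exact h.2 a b hab hI

end Layers

section Bound

lemma eq_univ_of_monotone_of_ssubset {α : Type*} [Fintype α] {S : ℕ → Finset α}
    (hmono : Monotone S) (h0 : (S 0).Nonempty) (hS : ∀ j, S j ≠ .univ → S j ⊂ S (j + 1)) :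
    S (Fintype.card α - 1) = .univ := by
  have key : ∀ j, S j = .univ ∨ j + 1 ≤ (S j).card := by
    intro j
    induction j with
    | zero => exact .inr h0.card_pos
    | succ j ih =>
      by_cases hj : S j = .univ
      · exact .inl (Finset.eq_univ_of_forall fun x => hmono j.le_succ (hj ▸ Finset.mem_univ x))
      · have := Finset.card_lt_card (hS j hj)
        have := ih.resolve_left hj
        exact .inr (by omega)
  have hcard := h0.card_pos.trans_le (Finset.card_le_univ _)
  refine (key _).elim id fun h => Finset.eq_univ_of_card _ ?_
  exact le_antisymm (Finset.card_le_univ _) (by omega)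

variable {W : List A} {f : A → ℕ}

lemma Alive.lt_succ_mul_count (h : Alive I W f) {a b : A} (hab : a ≠ b) (hI : ¬ I a b)
    (hb : b ∈ W) {j : ℕ} (ha : f a < (j + 1) * W.count a) : f b < (j + 2) * W.count b := by
  have hlen : 0 < (proj a b W).length := length_pos_of_mem (mem_proj.mpr ⟨hb, .inr rfl⟩)
  obtain ⟨q, r, hr, hqr⟩ :
      ∃ q r, r < (proj a b W).length ∧ f a + f b = q * (proj a b W).length + r :=
    ⟨_, _, Nat.mod_lt _ hlen, (Nat.div_add_mod' _ _).symm⟩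
  -- after `q` full periods of `proj a b W`, neither letter can run ahead by another period
  have hcount : ∀ x, x = a ∨ x = b →
      q * W.count x ≤ f x ∧ f x ≤ q * W.count x + W.count x := by
    intro x hx
    have hcx : (proj a b W).count x = W.count x := by
      rcases hx with rfl | rfl
      exacts [count_proj_left _ _ _, count_proj_right _ _ _]
    have hle := count_cycTake_le hr.le x
    rw [← h.count_cycTake hab hI hx, hqr, count_cycTake_mul_length_add, hcx]
    rw [hcx] at hle
    omega
  have hfa := hcount a (.inl rfl)
  have hfb := hcount b (.inr rfl)
  have hq : q < j + 1 := Nat.lt_of_mul_lt_mul_right (hfa.1.trans_lt ha)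
  have hbpos : 0 < W.count b := count_pos_iff.mpr hb
  calc f b ≤ (q + 1) * W.count b := by rw [Nat.succ_mul]; exact hfb.2
    _ ≤ (j + 1) * W.count b := Nat.mul_le_mul_right _ hq
    _ < (j + 2) * W.count b := Nat.mul_lt_mul_of_pos_right (by omega) hbpos

theorem Alive.le_card_smul_counts [Fintype A] (hconn : DependencyConnected I W)
    (h : Alive I W f) (hf : ¬ counts W ≤ f) : f ≤ Fintype.card A • counts W := by
  obtain ⟨a₀, ha₀⟩ : ∃ a₀, f a₀ < W.count a₀ := by simpa [Pi.le_def] using hf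
  have ha₀W : a₀ ∈ W := count_pos_iff.mp (by omega)
  -- `S j` gains a dependent neighbour at each step, so it exhausts `A` within `|A| - 1` steps
  let S : ℕ → Finset A := fun j => {a | a ∈ W → f a < (j + 1) * W.count a}
  have hS_mem : ∀ j a, a ∈ S j ↔ (a ∈ W → f a < (j + 1) * W.count a) := by simp [S]
  have hmono : Monotone S := monotone_nat_of_le_succ fun j a ha => by
    rw [hS_mem] at ha ⊢
    exact fun haW => (ha haW).trans_le (Nat.mul_le_mul_right _ (by omega))
  have hS : ∀ j, S j ≠ .univ → S j ⊂ S (j + 1) := by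
    intro j hj
    obtain ⟨b₀, hb₀⟩ : ∃ b₀, b₀ ∉ S j := by simpa [Finset.eq_univ_iff_forall] using hj
    rw [hS_mem, Classical.not_imp] at hb₀
    obtain ⟨a, haW, b, hbW, haS, hbS, hI⟩ := hconn (S j)
      ⟨a₀, ha₀W, hmono (Nat.zero_le j) ((hS_mem 0 a₀).mpr fun _ => by simpa using ha₀)⟩
      ⟨b₀, hb₀.1, fun h => hb₀.2 ((hS_mem j b₀).mp h hb₀.1)⟩
    rw [Finset.mem_coe, hS_mem] at haS hbS
    rw [Classical.not_imp] at hbS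
    refine Finset.ssubset_iff_of_subset (hmono j.le_succ) |>.mpr ⟨b, ?_, (hS_mem j b).not.mpr
      (Classical.not_imp.mpr hbS)⟩
    exact (hS_mem _ b).mpr fun _ =>
      h.lt_succ_mul_count (by rintro rfl; exact hbS.2 (haS haW)) hI hbW (haS haW)
  have huniv := eq_univ_of_monotone_of_ssubset hmono
    ⟨a₀, (hS_mem 0 a₀).mpr fun _ => by simpa using ha₀⟩ hS
  intro a
  by_cases haW : a ∈ W
  · have := (hS_mem _ a).mp (huniv ▸ Finset.mem_univ a) haW
    rw [Nat.sub_add_cancel (Fintype.card_pos_iff.mpr ⟨a⟩)] at this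
    simpa using this.le
  · simp [h.1 a haW]

end Bound

/-! ### The automaton -/

section Automaton

variable {W : List A}

open scoped Classical in
noncomputable def step (W : List A) (p : (A → ℕ) × Bool) (a : A) : (A → ℕ) × Bool :=
  if counts W ≤ p.1 + Pi.single a 1 then (p.1 + Pi.single a 1 - counts W, true)
  else (p.1 + Pi.single a 1, p.2)

noncomputable def starNFA (I : A → A → Prop) (W : List A) : NFA' ((A → ℕ) × Bool) A where
  Δ p a q := Alive I W (p.1 + Pi.single a 1) ∧ q = step W p a
  q0 := (0, false)
  F := {p | p.1 = 0}

def IsReduction (W : List A) (c : A → ℕ) (p : (A → ℕ) × Bool) : Prop :=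
  ∃ m, c = p.1 + m • counts W ∧ ¬ counts W ≤ p.1 ∧ (p.2 = true ↔ 0 < m)

lemma not_counts_le_zero (hW : W ≠ []) : ¬ counts W ≤ 0 := fun h => by
  obtain ⟨a, ha⟩ := exists_mem_of_ne_nil W hW
  simpa using (count_pos_iff.mpr ha).trans_le (h a)

lemma isReduction_zero (hW : W ≠ []) : IsReduction W 0 (0, false) :=
  ⟨0, by simp, not_counts_le_zero hW, by simp⟩

lemma le_of_add_nsmul_counts_eq {f g : A → ℕ} {m n : ℕ} (h : f + m • counts W = g + n • counts W)
    (hf : ¬ counts W ≤ f) : n ≤ m := by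
  by_contra! hlt
  refine hf fun x => ?_
  have h₁ := congrFun h x
  have h₂ := Nat.mul_le_mul_right (W.count x) hlt
  simp only [Pi.add_apply, Pi.smul_apply, counts_apply, smul_eq_mul] at h₁
  rw [Nat.succ_mul] at h₂
  simp only [counts_apply]
  omega

namespace IsReduction

variable {c : A → ℕ} {p q : (A → ℕ) × Bool}

lemma unique (hp : IsReduction W c p) (hq : IsReduction W c q) : p = q := by
  obtain ⟨m, hm, hpW, hpb⟩ := hp
  obtain ⟨n, hn, hqW, hqb⟩ := hq
  obtain rfl : m = n := le_antisymm (le_of_add_nsmul_counts_eq (hn.symm.trans hm) hqW)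
    (le_of_add_nsmul_counts_eq (hm.symm.trans hn) hpW)
  exact Prod.ext (add_right_cancel (hm.symm.trans hn)) (Bool.eq_iff_iff.mpr (hpb.trans hqb.symm))

lemma step (h : IsReduction W c p) (a : A) :
    IsReduction W (c + Pi.single a 1) (TraceStar.step W p a) := by
  obtain ⟨m, rfl, hlt, hbit⟩ := h
  unfold TraceStar.step
  split_ifs with hle
  · refine ⟨m + 1, funext fun x => ?_, fun hle' => hlt fun x => ?_, by simp⟩
    · have := hle x
      simp only [Pi.add_apply, Pi.sub_apply, Pi.smul_apply, smul_eq_mul, counts_apply] at this ⊢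
      rw [Nat.succ_mul]
      omega
    -- the letter that was short of a full copy before reading `a` is now at zero
    · obtain ⟨y, hy⟩ : ∃ y, p.1 y < W.count y := by simpa [Pi.le_def] using hlt
      have h₁ := hle' y
      have h₂ := hle y
      simp only [Pi.add_apply, Pi.sub_apply, counts_apply, Pi.single_apply] at h₁ h₂
      split_ifs at h₁ h₂ <;> omega
  · exact ⟨m, by rw [add_right_comm], hle, hbit⟩

lemma alive_iff (h : IsReduction W c p) (d : A → ℕ) : Alive I W (p.1 + d) ↔ Alive I W (c + d) := by
  obtain ⟨m, rfl, -, -⟩ := h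
  rw [add_right_comm, alive_add_nsmul_counts_iff]

end IsReduction

lemma exists_isReduction (hW : W ≠ []) (v : List A) : ∃ p, IsReduction W (counts v) p := by
  induction v using reverseRecOn with
  | nil => exact ⟨_, isReduction_zero hW⟩
  | append_singleton v a ih =>
    obtain ⟨p, hp⟩ := ih
    exact ⟨_, counts_concat v a ▸ hp.step a⟩

theorem starNFA_reaches_iff (hW : W ≠ []) {v : List A} {p : (A → ℕ) × Bool} :
    (starNFA I W).Reaches (starNFA I W).q0 v p ↔
      (∀ u, u <+: v → Alive I W (counts u)) ∧ IsReduction W (counts v) p := by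
  induction v using reverseRecOn generalizing p with
  | nil =>
    simp only [NFA'.Reaches, prefix_nil, forall_eq, counts_nil]
    exact ⟨fun h => h ▸ ⟨alive_zero, isReduction_zero hW⟩,
      fun h => (isReduction_zero hW).unique h.2⟩
  | append_singleton v a ih =>
    rw [NFA'.reaches_concat]
    simp only [prefix_concat_iff, forall_eq_or_imp, counts_concat]
    constructor
    · rintro ⟨q, hq, halive, rfl⟩
      obtain ⟨hpre, hred⟩ := ih.mp hq
      exact ⟨⟨(hred.alive_iff _).mp halive, hpre⟩, hred.step a⟩
    · rintro ⟨⟨halive, hpre⟩, hred⟩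
      obtain ⟨q, hq⟩ := exists_isReduction hW v
      exact ⟨q, ih.mpr ⟨hpre, hq⟩, (hq.alive_iff _).mpr halive, ((hq.step a).unique hred).symm⟩

theorem lang_starNFA (hsym : ∀ a b, I a b → I b a) (hW : W ≠ []) :
    (starNFA I W).lang = {v | ∃ n, TraceEquiv I v (npow W n)} := by
  ext v
  constructor
  · rintro ⟨p, hp0, hv⟩
    obtain ⟨hpre, m, hm, -, -⟩ := (starNFA_reaches_iff hW).mp hv
    rw [show p.1 = 0 from hp0, zero_add] at hm
    exact ⟨m, traceEquiv_npow_of_forall_prefix_alive hsym hpre hm⟩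
  · rintro ⟨n, hv⟩
    refine ⟨(0, decide (0 < n)), rfl, (starNFA_reaches_iff hW).mpr
      ⟨fun u hu => alive_counts_of_prefix hsym hv hu, n, ?_, not_counts_le_zero hW, by simp⟩⟩
    rw [hv.counts_eq, counts_npow, zero_add]

theorem starNFA_diamond (hsym : ∀ a b, I a b → I b a) (hW : W ≠ []) {a b : A}
    {p q r : (A → ℕ) × Bool} (hp : (starNFA I W).Reachable p) (hI : I a b)
    (hpq : (starNFA I W).Δ p a q) (hqr : (starNFA I W).Δ q b r) :
    ∃ q', (starNFA I W).Δ p b q' ∧ (starNFA I W).Δ q' a r := by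
  rcases eq_or_ne a b with rfl | hab
  · exact ⟨q, hpq, hqr⟩
  obtain ⟨v, hv⟩ := hp
  obtain ⟨hpre, hred⟩ := (starNFA_reaches_iff hW).mp hv
  obtain ⟨hpa, rfl⟩ := hpq
  obtain ⟨hqb, rfl⟩ := hqr
  have hred_a := hred.step a
  have hred_b := hred.step b
  rw [hred.alive_iff] at hpa
  rw [hred_a.alive_iff] at hqb
  have hb := (hpre v prefix_rfl).add_single_of_indep hsym hab hI hqb
  refine ⟨step W p b, ⟨(hred.alive_iff _).mpr hb, rfl⟩, ?_, ?_⟩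
  · rwa [hred_b.alive_iff, add_right_comm]
  · exact (hred_a.step b).unique (add_right_comm (counts v) (Pi.single a 1) _ ▸ hred_b.step a)

theorem starNFA_alphabet (hW : W ≠ []) {v : List A} {p : (A → ℕ) × Bool}
    (h : (starNFA I W).Reaches (starNFA I W).q0 v p) :
    {a | p.1 a ≠ 0 ∨ (p.2 = true ∧ a ∈ W)} = {a | a ∈ v} := by
  obtain ⟨-, m, hm, -, hbit⟩ := (starNFA_reaches_iff hW).mp h
  ext a
  have hva := congrFun hm a
  simp only [counts_apply, Pi.add_apply, Pi.smul_apply, smul_eq_mul] at hva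
  simp only [Set.mem_ofPred_eq, hbit, ← count_pos_iff (l := v), ← count_pos_iff (l := W), hva]
  constructor
  · rintro (h | ⟨hm, hW⟩)
    · omega
    · exact Nat.add_pos_right _ (Nat.mul_pos hm hW)
  · intro h
    rcases Nat.eq_zero_or_pos (p.1 a) with h0 | h0
    · exact .inr (by simpa [h0, Nat.pos_iff_ne_zero] using h)
    · exact .inl h0.ne'

lemma starNFA_reachable (hW : W ≠ []) {p : (A → ℕ) × Bool} (hp : (starNFA I W).Reachable p) :
    Alive I W p.1 ∧ ¬ counts W ≤ p.1 := by
  obtain ⟨v, hv⟩ := hp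
  obtain ⟨hpre, hred⟩ := (starNFA_reaches_iff hW).mp hv
  have halive := (hred.alive_iff 0).mpr (by simpa using hpre v prefix_rfl)
  obtain ⟨-, -, hlt, -⟩ := hred
  exact ⟨by simpa using halive, hlt⟩

def traceCounts (t : Trace A I) : A → ℕ :=
  Con.liftOn t (fun x => counts x.toList) fun _ _ h => funext (perm_toList_of_traceCon h).count_eq

lemma Alive.layer_mem_image (hsym : ∀ a b, I a b → I b a) {f : A → ℕ} (h : Alive I W f)
    (i : ℕ) :
    layer W f i ∈ traceCounts '' tracePrefixes A I (trc A I (FreeMonoid.ofList W)) := by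
  obtain ⟨u, z, huz, hu⟩ := exists_traceEquiv_append_counts hsym (layer_le_counts i)
    ((alive_layer h i).prefixCountsOnPairs (layer_le_counts i))
  exact ⟨_, trc_mem_tracePrefixes huz, hu⟩

theorem finite_and_card_reachable_starNFA_le [Fintype A] (hsym : ∀ a b, I a b → I b a)
    (hW : W ≠ []) (hconn : DependencyConnected I W) :
    Finite {p // (starNFA I W).Reachable p} ∧ Nat.card {p // (starNFA I W).Reachable p} ≤
      2 * (tracePrefixes A I (trc A I (FreeMonoid.ofList W))).ncard ^ Fintype.card A := by
  set P := traceCounts '' tracePrefixes A I (trc A I (FreeMonoid.ofList W))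
  have hP : P.Finite := (tracePrefixes_finite _).image _
  have := hP.to_subtype
  let Φ : {p // (starNFA I W).Reachable p} → Bool × (Fin (Fintype.card A) → P) := fun p =>
    (p.1.2, fun i => ⟨layer W p.1.1 i, (starNFA_reachable hW p.2).1.layer_mem_image hsym i⟩)
  have hsum : ∀ p : {p // (starNFA I W).Reachable p},
      ∑ i ∈ Finset.range (Fintype.card A), layer W p.1.1 i = p.1.1 := fun p =>
    have h := starNFA_reachable hW p.2
    sum_layer (h.1.le_card_smul_counts hconn h.2)
  have hΦ : Function.Injective Φ := by
    intro p q h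
    simp only [Φ, Prod.mk.injEq, funext_iff, Subtype.ext_iff] at h
    refine Subtype.ext (Prod.ext ?_ h.1)
    rw [← hsum p, ← hsum q]
    exact Finset.sum_congr rfl fun i hi => funext (h.2 ⟨i, Finset.mem_range.mp hi⟩)
  refine ⟨Finite.of_injective Φ hΦ, (Nat.card_le_card_of_injective Φ hΦ).trans ?_⟩
  rw [Nat.card_prod, Nat.card_fun, Nat.card_eq_fintype_card (α := Bool), Fintype.card_bool,
    Nat.card_eq_fintype_card (α := Fin _), Fintype.card_fin, Nat.card_coe_set_eq]
  gcongr
  exact Set.ncard_image_le (tracePrefixes_finite _)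

end Automaton

end TraceStar

theorem star_closure_regular_general (A : Type) [Fintype A] (I : A → A → Prop)
    (hsym : ∀ a b, I a b → I b a)
    (w : FreeMonoid A) (hne : trc A I w ≠ 1)
    (hconn : TraceConnected A I (trc A I w)) :
    ∃ (Q : Type) (_ : Fintype Q) (M : NFA' Q A),
      IDiamond I M ∧ Memorizing M ∧
      Fintype.card Q ≤ 2 * (tracePrefixes A I (trc A I w)).ncard ^ (Fintype.card A) ∧
      M.lang = {v : List A | ∃ n : ℕ, traceCon A I (FreeMonoid.ofList v) (w ^ n)} := by
  open TraceStar in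
  classical
  obtain ⟨W, rfl⟩ := FreeMonoid.ofList.surjective w
  have hW : W ≠ [] := fun h => hne (trc_ofList_eq_one_iff.mpr h)
  obtain ⟨hfin, hcard⟩ := finite_and_card_reachable_starNFA_le hsym hW
    (dependencyConnected_of_traceConnected hsym hconn)
  refine ⟨_, Fintype.ofFinite _, (starNFA I W).reachablePart,
    (starNFA I W).iDiamond_reachablePart I fun _ _ _ _ _ hp hI => starNFA_diamond hsym hW hp hI,
    (starNFA I W).memorizing_reachablePart _ fun _ _ => starNFA_alphabet hW, ?_, ?_⟩
  · rwa [Fintype.card_eq_nat_card]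
  · rw [NFA'.lang_reachablePart, lang_starNFA hsym hW]
    simp only [TraceEquiv, ofList_npow]

/-- For a nonempty connected trace u, the closure [u*]_I is accepted by a
memorizing I-diamond NFA with at most 2·ρ(u)^|A| states. -/
theorem star_closure_regular (A : Type) [Fintype A] (I : A → A → Prop)
    (hirr : ∀ a, ¬ I a a) (hsym : ∀ a b, I a b → I b a)
    (w : FreeMonoid A) (hne : trc A I w ≠ 1)
    (hconn : TraceConnected A I (trc A I w)) :
    ∃ (Q : Type) (_ : Fintype Q) (M : NFA' Q A),
      IDiamond I M ∧ Memorizing M ∧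
      Fintype.card Q ≤ 2 * (tracePrefixes A I (trc A I w)).ncard ^ (Fintype.card A) ∧
      M.lang = {v : List A | ∃ n : ℕ, traceCon A I (FreeMonoid.ofList v) (w ^ n)} :=
  star_closure_regular_general A I hsym w hne hconn
end

section
/- Let p, u, s, q, v, t ∈ M(A,I) with u ≠ 1 and v ≠ 1 both connected. Then the set L(p,u,s,q,v,t) = {(x,y) ∈ ℕ × ℕ : p u^x s = q v^y t} is semilinear; in fact it is a finite union of linear sets of the form {(a + bz, c + dz) : z ∈ ℕ}. -/
def progression (v w : ℕ × ℕ) : Set (ℕ × ℕ) := Set.range fun z : ℕ => v + z • w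

def IsFiniteUnionOfProgressions (T : Set (ℕ × ℕ)) : Prop :=
  ∃ S : Set ((ℕ × ℕ) × (ℕ × ℕ)), S.Finite ∧ T = ⋃ vw ∈ S, progression vw.1 vw.2

theorem progression_zero (v : ℕ × ℕ) : progression v 0 = {v} := by
  simp [progression]

theorem Set.Finite.isFiniteUnionOfProgressions {T : Set (ℕ × ℕ)} (hT : T.Finite) :
    IsFiniteUnionOfProgressions T :=
  ⟨(fun v => (v, 0)) '' T, hT.image _, by
    simp only [Set.biUnion_image, progression_zero, Set.biUnion_of_singleton]⟩

theorem IsFiniteUnionOfProgressions.union_progression {T : Set (ℕ × ℕ)}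
    (hT : IsFiniteUnionOfProgressions T) (v w : ℕ × ℕ) :
    IsFiniteUnionOfProgressions (T ∪ progression v w) := by
  obtain ⟨S, hS, rfl⟩ := hT
  exact ⟨insert (v, w) S, hS.insert _, by rw [Set.biUnion_insert, Set.union_comm]⟩

theorem IsFiniteUnionOfProgressions.exists_fin {T : Set (ℕ × ℕ)}
    (hT : IsFiniteUnionOfProgressions T) :
    ∃ (r : ℕ) (a b c d : Fin r → ℕ),
      T = ⋃ i : Fin r, {xy : ℕ × ℕ | ∃ z : ℕ, xy = (a i + b i * z, c i + d i * z)} := by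
  obtain ⟨S, hS, rfl⟩ := hT
  obtain ⟨r, f, hf⟩ := hS.fin_embedding
  refine ⟨r, fun i => (f i).1.1, fun i => (f i).2.1, fun i => (f i).1.2, fun i => (f i).2.2, ?_⟩
  rw [← hf, Set.biUnion_range]
  refine Set.iUnion_congr fun i => Set.ext fun xy => ?_
  simp [progression, Prod.ext_iff, eq_comm, mul_comm]

section Rays

variable {T : Set (ℕ × ℕ)}

theorem eq_union_progression_of_minimal_gap
    (hmono : ∀ p ∈ T, ∀ q ∈ T, p.1 ≤ q.1 → p ≤ q)
    (hext : ∀ p ∈ T, ∀ e, p + e ∈ T → ∀ n : ℕ, p + n • e ∈ T)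
    {p e : ℕ × ℕ} (hp : p ∈ T) (hpe : p + e ∈ T) (he : 0 < e.1)
    (hmin : ∀ q ∈ T, ∀ r ∈ T, q.1 < r.1 → e.1 ≤ r.1 - q.1) :
    T = {q ∈ T | q.1 < p.1} ∪ progression p e := by
  refine Set.Subset.antisymm (fun r hr => ?_) (Set.union_subset (fun _ hq => hq.1) ?_)
  · rcases lt_or_ge r.1 p.1 with hlt | hle
    · exact Or.inl ⟨hr, hlt⟩
    obtain ⟨k, j, hj, hr1⟩ : ∃ k j, j < e.1 ∧ r.1 = p.1 + e.1 * k + j :=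
      ⟨(r.1 - p.1) / e.1, (r.1 - p.1) % e.1, Nat.mod_lt _ he, by
        have := Nat.div_add_mod (r.1 - p.1) e.1
        omega⟩
    have hq := hext p hp e hpe k
    have hq1 : (p + k • e).1 = p.1 + e.1 * k := by simp [mul_comm]
    have hj0 : j = 0 := by
      by_contra hne
      have := hmin _ hq r hr (by omega)
      omega
    have hfst : (p + k • e).1 = r.1 := by omega
    exact Or.inr ⟨k, le_antisymm (hmono _ hq r hr hfst.le) (hmono r hr _ hq hfst.ge)⟩
  · rintro _ ⟨k, rfl⟩
    exact hext p hp e hpe k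

theorem isFiniteUnionOfProgressions_of_add_nsmul_mem
    (hmono : ∀ p ∈ T, ∀ q ∈ T, p.1 ≤ q.1 → p ≤ q)
    (hext : ∀ p ∈ T, ∀ e, p + e ∈ T → ∀ n : ℕ, p + n • e ∈ T) :
    IsFiniteUnionOfProgressions T := by
  have hinj : Set.InjOn Prod.fst T := fun p hp q hq h =>
    le_antisymm (hmono p hp q hq h.le) (hmono q hq p hp h.ge)
  rcases T.finite_or_infinite with hfin | hinf
  · exact hfin.isFiniteUnionOfProgressions
  set gaps := {g | ∃ q ∈ T, ∃ r ∈ T, q.1 < r.1 ∧ r.1 - q.1 = g}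
  have hgaps : gaps.Nonempty := by
    obtain ⟨q, hq, r, hr, hne⟩ := hinf.nontrivial
    rcases lt_or_gt_of_ne (hinj.ne hq hr hne) with h | h
    · exact ⟨_, q, hq, r, hr, h, rfl⟩
    · exact ⟨_, r, hr, q, hq, h, rfl⟩
  obtain ⟨p, hp, r, hr, hlt, hgap⟩ := Nat.sInf_mem hgaps
  have hpr : p + (r - p) = r := add_tsub_cancel_of_le (hmono p hp r hr hlt.le)
  rw [eq_union_progression_of_minimal_gap hmono hext hp (hpr ▸ hr) (by simpa using hlt)
    fun q hq r' hr' h => by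
      simpa [hgap] using Nat.sInf_le (show r'.1 - q.1 ∈ gaps from ⟨q, hq, r', hr', h, rfl⟩)]
  refine Set.Finite.isFiniteUnionOfProgressions ?_ |>.union_progression p (r - p)
  refine Set.Finite.of_finite_image ((Set.finite_Iio p.1).subset ?_) (hinj.mono fun _ h => h.1)
  rintro _ ⟨q, hq, rfl⟩
  exact hq.2

end Rays

open FreeMonoid

section TraceCommutation

variable {A : Type} {I : A → A → Prop}

@[simp] theorem trc_mul (w w' : FreeMonoid A) : trc A I (w * w') = trc A I w * trc A I w' :=
  map_mul _ _ _

@[simp] theorem trc_one : trc A I (1 : FreeMonoid A) = 1 := map_one _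

theorem trc_surjective : Function.Surjective (trc A I) := Con.mk'_surjective

theorem commute_trc_of {a b : A} (h : I a b) : Commute (trc A I (of a)) (trc A I (of b)) := by
  rw [Commute, SemiconjBy, ← trc_mul, ← trc_mul]
  exact (traceCon A I).eq.2 (ConGen.Rel.of _ _ ⟨a, b, h, rfl, rfl⟩)

theorem commute_trc {w w' : FreeMonoid A} (h : ∀ a ∈ w.toList, ∀ b ∈ w'.toList, I a b) :
    Commute (trc A I w) (trc A I w') := by
  induction w using FreeMonoid.inductionOn' with
  | one => simp
  | of_mul a w ih =>
    rw [trc_mul]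
    refine .mul_left ?_ (ih fun x hx => h x (List.mem_cons_of_mem _ hx))
    clear ih
    induction w' using FreeMonoid.inductionOn' with
    | one => simp
    | of_mul b w' ih =>
      rw [trc_mul]
      exact .mul_right (commute_trc_of (h a List.mem_cons_self b List.mem_cons_self))
        (ih fun x hx y hy => h x hx y (List.mem_cons_of_mem _ hy))

theorem trc_append_cons {c : A} {pre suf : List A} (h : ∀ b ∈ pre, I b c) :
    trc A I (ofList (pre ++ c :: suf)) = trc A I (of c) * trc A I (ofList (pre ++ suf)) := by
  simp only [ofList_append, ofList_cons, trc_mul, ← mul_assoc]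
  rw [(commute_trc (w := ofList pre) (w' := of c) fun a ha b hb => ?_).eq]
  rw [toList_of, List.mem_singleton] at hb
  exact hb ▸ h a ha

theorem TraceIndep.commute_s9 {s t : Trace A I} (h : TraceIndep A I s t) : Commute s t := by
  obtain ⟨w, rfl⟩ := trc_surjective s
  obtain ⟨w', rfl⟩ := trc_surjective t
  exact commute_trc (h w w' rfl rfl)

end TraceCommutation

section Projection

variable {A : Type} {I : A → A → Prop} [DecidableEq A]

def proj (a b : A) (l : List A) : List A := l.filter fun c => c = a ∨ c = b

def ProjEquiv (I : A → A → Prop) (l l' : List A) : Prop :=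
  ∀ a b, ¬ I a b → proj a b l = proj a b l'

theorem proj_append (a b : A) (l l' : List A) : proj a b (l ++ l') = proj a b l ++ proj a b l' :=
  List.filter_append _ _

theorem proj_cons_of_mem {a b c : A} (h : c = a ∨ c = b) (l : List A) :
    proj a b (c :: l) = c :: proj a b l :=
  List.filter_cons_of_pos (by simpa using h)

theorem mem_proj {a b c : A} {l : List A} : c ∈ proj a b l ↔ c ∈ l ∧ (c = a ∨ c = b) := by
  simp [proj]

theorem projEquiv_of_trc_eq (hsym : ∀ a b, I a b → I b a) {w w' : FreeMonoid A}
    (h : trc A I w = trc A I w') : ProjEquiv I w.toList w'.toList := by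
  have h' := (traceCon A I).eq.1 h
  clear h
  induction h' with
  | of x y hxy =>
    obtain ⟨c, d, hcd, rfl, rfl⟩ := hxy
    intro a b hab
    by_cases hc : c = a ∨ c = b <;> by_cases hd : d = a ∨ d = b <;>
      simp only [proj, toList_mul, toList_of, List.filter_append, List.filter_singleton, hc, hd,
        decide_true, decide_false, cond_true, cond_false, List.nil_append, List.append_nil]
    rcases hc with rfl | rfl <;> rcases hd with rfl | rfl
    all_goals first | rfl | exact absurd hcd hab | exact absurd (hsym _ _ hcd) hab
  | refl => exact fun _ _ _ => rfl
  | symm _ ih => exact fun a b hab => (ih a b hab).symm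
  | trans _ _ ih ih' => exact fun a b hab => (ih a b hab).trans (ih' a b hab)
  | mul _ _ ih ih' =>
    intro a b hab
    simp only [toList_mul, proj_append, ih a b hab, ih' a b hab]

theorem ProjEquiv.mem_iff (hirr : ∀ a, ¬ I a a) {l l' : List A} (h : ProjEquiv I l l') {c : A} :
    c ∈ l ↔ c ∈ l' := by
  have := congrArg (c ∈ ·) (h c c (hirr c))
  simpa [mem_proj] using this

theorem ProjEquiv.append_left_cancel {l x y : List A} (h : ProjEquiv I (l ++ x) (l ++ y)) :
    ProjEquiv I x y := fun a b hab =>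
  List.append_cancel_left (by simpa only [proj_append] using h a b hab)

theorem ProjEquiv.append_right_cancel {l x y : List A} (h : ProjEquiv I (x ++ l) (y ++ l)) :
    ProjEquiv I x y := fun a b hab =>
  List.append_cancel_right (by simpa only [proj_append] using h a b hab)

-- A letter `b` before the first `c` that does not commute with `c` would head the projection
-- onto `{b, c}`, which has to start with `c`.
theorem ProjEquiv.forall_indep_of_cons {c : A} {x pre suf : List A}
    (h : ProjEquiv I (c :: x) (pre ++ c :: suf)) (hc : c ∉ pre) : ∀ b ∈ pre, I b c := by
  intro b hb
  by_contra hbc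
  have hproj := h b c hbc
  obtain ⟨e, rest, he⟩ :=
    List.exists_cons_of_ne_nil (List.ne_nil_of_mem (mem_proj.2 ⟨hb, .inl rfl⟩))
  rw [proj_cons_of_mem (.inr rfl), proj_append, he] at hproj
  have hce : c = e := (List.cons.inj hproj).1
  exact hc (hce ▸ (mem_proj.1 (he ▸ List.mem_cons_self)).1)

theorem trc_eq_of_projEquiv (hirr : ∀ a, ¬ I a a) (hsym : ∀ a b, I a b → I b a) :
    ∀ {l l' : List A}, ProjEquiv I l l' → trc A I (ofList l) = trc A I (ofList l')
  | [], l', h => by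
    obtain rfl : l' = [] := List.eq_nil_iff_forall_not_mem.2 fun c hc => by
      simpa using (h.mem_iff hirr).2 hc
    rfl
  | c :: x, l', h => by
    obtain ⟨pre, suf, rfl, hc⟩ := List.eq_append_cons_of_mem ((h.mem_iff hirr).1 List.mem_cons_self)
    have hpre := h.forall_indep_of_cons hc
    have hswap := trc_append_cons (I := I) (suf := suf) hpre
    have hswap' : ProjEquiv I (pre ++ c :: suf) (c :: (pre ++ suf)) :=
      projEquiv_of_trc_eq hsym (w := ofList _) (w' := ofList _) hswap
    have hx : ProjEquiv I x (pre ++ suf) := ProjEquiv.append_left_cancel (l := [c])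
      fun a b hab => (h a b hab).trans (hswap' a b hab)
    rw [hswap, ofList_cons, trc_mul, trc_eq_of_projEquiv hirr hsym hx]

theorem trc_eq_iff_projEquiv (hirr : ∀ a, ¬ I a a) (hsym : ∀ a b, I a b → I b a)
    {w w' : FreeMonoid A} : trc A I w = trc A I w' ↔ ProjEquiv I w.toList w'.toList :=
  ⟨projEquiv_of_trc_eq hsym, trc_eq_of_projEquiv hirr hsym⟩

end Projection

section Consequences

variable {A : Type} {I : A → A → Prop}

theorem isCancelMul_trace (hirr : ∀ a, ¬ I a a) (hsym : ∀ a b, I a b → I b a) :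
    IsCancelMul (Trace A I) := by
  classical
  refine { mul_left_cancel := fun x y z h => ?_, mul_right_cancel := fun x y z h => ?_ } <;>
  · obtain ⟨wx, rfl⟩ := trc_surjective x
    obtain ⟨wy, rfl⟩ := trc_surjective y
    obtain ⟨wz, rfl⟩ := trc_surjective z
    beta_reduce at h
    rw [← trc_mul, ← trc_mul, trc_eq_iff_projEquiv hirr hsym] at h
    rw [trc_eq_iff_projEquiv hirr hsym]
    first
    | exact ProjEquiv.append_left_cancel h
    | exact ProjEquiv.append_right_cancel h

theorem exists_trc_ofList_eq (t : Trace A I) : ∃ l, trc A I (ofList l) = t :=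
  let ⟨w, hw⟩ := trc_surjective t
  ⟨w.toList, hw⟩

theorem mem_toList_of_trc_eq (hirr : ∀ a, ¬ I a a) (hsym : ∀ a b, I a b → I b a)
    {w w' : FreeMonoid A} (h : trc A I w = trc A I w') {a : A} (ha : a ∈ w.toList) :
    a ∈ w'.toList := by
  classical
  exact ((projEquiv_of_trc_eq hsym h).mem_iff hirr).1 ha

theorem traceIndep_trc_iff (hirr : ∀ a, ¬ I a a) (hsym : ∀ a b, I a b → I b a)
    {w w' : FreeMonoid A} :
    TraceIndep A I (trc A I w) (trc A I w') ↔ ∀ a ∈ w.toList, ∀ b ∈ w'.toList, I a b :=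
  ⟨fun h => h w w' rfl rfl, fun h _ _ hv hv' a ha b hb =>
    h a (mem_toList_of_trc_eq hirr hsym hv.symm ha) b (mem_toList_of_trc_eq hirr hsym hv'.symm hb)⟩

theorem TraceIndep.symm (hsym : ∀ a b, I a b → I b a) {s t : Trace A I}
    (h : TraceIndep A I s t) : TraceIndep A I t s :=
  fun w w' hw hw' a ha b hb => hsym _ _ (h w' w hw' hw b hb a ha)

theorem traceIndep_one_left (hirr : ∀ a, ¬ I a a) (hsym : ∀ a b, I a b → I b a)
    (t : Trace A I) : TraceIndep A I 1 t := by
  obtain ⟨w, rfl⟩ := trc_surjective t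
  rw [← trc_one, traceIndep_trc_iff hirr hsym]
  simp [toList_one]

theorem traceIndep_mul_left_iff (hirr : ∀ a, ¬ I a a) (hsym : ∀ a b, I a b → I b a)
    {x y z : Trace A I} :
    TraceIndep A I (x * y) z ↔ TraceIndep A I x z ∧ TraceIndep A I y z := by
  obtain ⟨wx, rfl⟩ := trc_surjective x
  obtain ⟨wy, rfl⟩ := trc_surjective y
  obtain ⟨wz, rfl⟩ := trc_surjective z
  simp only [← trc_mul, traceIndep_trc_iff hirr hsym, toList_mul, List.mem_append, or_imp,
    forall_and]

theorem eq_one_of_traceIndep_self (hirr : ∀ a, ¬ I a a) {z : Trace A I}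
    (h : TraceIndep A I z z) : z = 1 := by
  obtain ⟨w, rfl⟩ := trc_surjective z
  cases w using FreeMonoid.casesOn with
  | one => exact trc_one
  | of_mul c w =>
    exact absurd (h _ _ rfl rfl c List.mem_cons_self c List.mem_cons_self) (hirr c)

theorem mem_of_trc_eq_of_mul (hirr : ∀ a, ¬ I a a) (hsym : ∀ a b, I a b → I b a)
    {w : FreeMonoid A} {c : A} {m : Trace A I} (h : trc A I w = trc A I (of c) * m) :
    c ∈ w.toList := by
  obtain ⟨wm, rfl⟩ := trc_surjective m
  rw [← trc_mul] at h
  exact mem_toList_of_trc_eq hirr hsym h.symm List.mem_cons_self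

theorem trc_append_cons_eq_of_mul (hirr : ∀ a, ¬ I a a) (hsym : ∀ a b, I a b → I b a)
    {c : A} {pre suf : List A} {m : Trace A I}
    (h : trc A I (ofList (pre ++ c :: suf)) = trc A I (of c) * m) (hc : c ∉ pre) :
    (∀ b ∈ pre, I b c) ∧ m = trc A I (ofList (pre ++ suf)) := by
  classical
  have := isCancelMul_trace hirr hsym
  obtain ⟨wm, rfl⟩ := trc_surjective m
  have hpre := (projEquiv_of_trc_eq hsym (h.trans (trc_mul _ _).symm).symm).forall_indep_of_cons hc
  exact ⟨hpre, mul_left_cancel (h.symm.trans (trc_append_cons hpre))⟩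

theorem trc_of_mul_eq_mul_cases (hirr : ∀ a, ¬ I a a) (hsym : ∀ a b, I a b → I b a)
    {c : A} {m y₁ y₂ : Trace A I} (h : trc A I (of c) * m = y₁ * y₂) :
    (∃ y₁', y₁ = trc A I (of c) * y₁' ∧ m = y₁' * y₂) ∨
      (∃ y₂', y₂ = trc A I (of c) * y₂' ∧ m = y₁ * y₂' ∧ TraceIndep A I y₁ (trc A I (of c))) := by
  obtain ⟨l₁, rfl⟩ := exists_trc_ofList_eq y₁
  obtain ⟨l₂, rfl⟩ := exists_trc_ofList_eq y₂
  by_cases hc₁ : c ∈ l₁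
  · obtain ⟨pre, suf, rfl, hc⟩ := List.eq_append_cons_of_mem hc₁
    obtain ⟨hpre, hm⟩ := trc_append_cons_eq_of_mul hirr hsym (pre := pre) (suf := suf ++ l₂)
      (by rw [h]; simp [ofList_append, ofList_cons, mul_assoc]) hc
    exact .inl ⟨_, trc_append_cons hpre, by rw [hm]; simp [ofList_append, mul_assoc]⟩
  · have hc₂ : c ∈ l₂ := by
      have := mem_of_trc_eq_of_mul hirr hsym (w := ofList (l₁ ++ l₂)) (m := m)
        (by rw [ofList_append, trc_mul, h])
      simpa [hc₁] using this
    obtain ⟨pre, suf, rfl, hc⟩ := List.eq_append_cons_of_mem hc₂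
    obtain ⟨hpre, hm⟩ := trc_append_cons_eq_of_mul hirr hsym (pre := l₁ ++ pre) (suf := suf)
      (by rw [h]; simp [ofList_append, ofList_cons]) (by simp [hc₁, hc])
    refine .inr ⟨_, trc_append_cons fun b hb => hpre b (List.mem_append_right _ hb),
      by rw [hm]; simp [ofList_append], ?_⟩
    rw [traceIndep_trc_iff hirr hsym]
    simpa using fun a ha => hpre a (List.mem_append_left _ ha)

/-- Levi's lemma for traces. -/
theorem exists_of_mul_eq_mul (hirr : ∀ a, ¬ I a a) (hsym : ∀ a b, I a b → I b a)
    {x₁ x₂ y₁ y₂ : Trace A I} (h : x₁ * x₂ = y₁ * y₂) :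
    ∃ z p q w, x₁ = z * p ∧ x₂ = q * w ∧ y₁ = z * q ∧ y₂ = p * w ∧ TraceIndep A I p q := by
  obtain ⟨w₁, rfl⟩ := trc_surjective x₁
  induction w₁ using FreeMonoid.inductionOn' generalizing y₁ y₂ with
  | one =>
    rw [trc_one, one_mul] at h
    exact ⟨1, 1, y₁, y₂, by simp, h, by simp, by simp, traceIndep_one_left hirr hsym _⟩
  | of_mul c w ih =>
    rw [trc_mul, mul_assoc] at h
    rcases trc_of_mul_eq_mul_cases hirr hsym h with ⟨y₁', rfl, hm⟩ | ⟨y₂', rfl, hm, hind⟩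
    · obtain ⟨z, p, q, w', hw, rfl, rfl, rfl, hpq⟩ := ih hm
      exact ⟨trc A I (of c) * z, p, q, w', by rw [trc_mul, hw, mul_assoc], rfl, by rw [mul_assoc],
        rfl, hpq⟩
    · obtain ⟨z, p, q, w', hw, rfl, rfl, rfl, hpq⟩ := ih hm
      obtain ⟨hzc, hqc⟩ := (traceIndep_mul_left_iff hirr hsym).1 hind
      refine ⟨z, trc A I (of c) * p, q, w', ?_, rfl, rfl, by rw [mul_assoc], ?_⟩
      · rw [trc_mul, hw, ← mul_assoc, hzc.commute_s9.symm.eq, mul_assoc]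
      · exact (traceIndep_mul_left_iff hirr hsym).2 ⟨hqc.symm hsym, hpq⟩

end Consequences

section PowerEquation

variable {A : Type} {I : A → A → Prop}

def traceLength : Trace A I →* Multiplicative ℕ :=
  (traceCon A I).lift (FreeMonoid.lift fun _ => Multiplicative.ofAdd 1) <|
    Con.conGen_le.2 fun _ _ ⟨_, _, _, hx, hy⟩ => by
      rw [Con.ker_rel, hx, hy, map_mul, map_mul, mul_comm]

theorem traceLength_pos {t : Trace A I} (ht : t ≠ 1) : 0 < (traceLength t).toAdd := by
  obtain ⟨w, rfl⟩ := trc_surjective t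
  cases w using FreeMonoid.casesOn with
  | one => exact absurd trc_one ht
  | of_mul c w =>
    rw [trc_mul, map_mul, toAdd_mul]
    exact Nat.lt_add_right _ Nat.one_pos

theorem mul_pow_mul_eq_of_traceIndep (hirr : ∀ a, ¬ I a a) (hsym : ∀ a b, I a b → I b a)
    {a b X Y : Trace A I} (hab : TraceIndep A I a b) (h : a * X * b = b * Y * a) (n : ℕ) :
    a * X ^ n * b = b * Y ^ n * a := by
  obtain ⟨z, a', b', W, rfl, hXb, rfl, hYa, -⟩ :=
    exists_of_mul_eq_mul hirr hsym (by simpa only [mul_assoc] using h)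
  obtain rfl : z = 1 := by
    refine eq_one_of_traceIndep_self hirr ?_
    have hz := ((traceIndep_mul_left_iff hirr hsym).1 hab).1.symm hsym
    exact ((traceIndep_mul_left_iff hirr hsym).1 hz).1
  simp only [one_mul] at hab hXb hYa ⊢
  have hXb' : SemiconjBy b' W X := hXb.symm
  have hYa' : SemiconjBy a' W Y := hYa.symm
  calc a' * X ^ n * b' = a' * (b' * W ^ n) := by rw [mul_assoc, (hXb'.pow_right n).eq]
    _ = b' * (a' * W ^ n) := by rw [← mul_assoc, hab.commute_s9.eq, mul_assoc]
    _ = b' * Y ^ n * a' := by rw [mul_assoc, (hYa'.pow_right n).eq]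

def powerSolutions (p u s q v t : Trace A I) : Set (ℕ × ℕ) :=
  {xy | p * u ^ xy.1 * s = q * v ^ xy.2 * t}

theorem add_nsmul_mem_powerSolutions (hirr : ∀ a, ¬ I a a) (hsym : ∀ a b, I a b → I b a)
    {p u s q v t : Trace A I} {xy e : ℕ × ℕ} (h₀ : xy ∈ powerSolutions p u s q v t)
    (h₁ : xy + e ∈ powerSolutions p u s q v t) (n : ℕ) :
    xy + n • e ∈ powerSolutions p u s q v t := by
  have := isCancelMul_trace hirr hsym
  obtain ⟨z, a, b, w, hpu, rfl, hqv, rfl, hab⟩ := exists_of_mul_eq_mul hirr hsym h₀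
  have expand : ∀ (r g c d : Trace A I) (i j : ℕ), r * g ^ i = z * c →
      r * g ^ (i + j) * (d * w) = z * (c * g ^ j * d) * w := by
    intro r g c d i j h
    rw [pow_add, ← mul_assoc r, h]
    simp only [mul_assoc]
  have hstep : a * u ^ e.1 * b = b * v ^ e.2 * a := by
    refine mul_left_cancel (a := z) (mul_right_cancel (b := w) ?_)
    rw [← expand _ _ _ _ _ _ hpu, ← expand _ _ _ _ _ _ hqv]
    exact h₁
  show p * u ^ (xy.1 + n * e.1) * (b * w) = q * v ^ (xy.2 + n * e.2) * (a * w)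
  rw [expand _ _ _ _ _ _ hpu, expand _ _ _ _ _ _ hqv, mul_comm n, mul_comm n, pow_mul, pow_mul,
    mul_pow_mul_eq_of_traceIndep hirr hsym hab hstep n]

theorem le_of_mem_powerSolutions {p u s q v t : Trace A I} (hv : v ≠ 1) {xy xy' : ℕ × ℕ}
    (h : xy ∈ powerSolutions p u s q v t) (h' : xy' ∈ powerSolutions p u s q v t)
    (hx : xy.1 ≤ xy'.1) : xy ≤ xy' := by
  have length_eq : ∀ {xy}, xy ∈ powerSolutions p u s q v t →
      (traceLength p).toAdd + xy.1 * (traceLength u).toAdd + (traceLength s).toAdd =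
        (traceLength q).toAdd + xy.2 * (traceLength v).toAdd + (traceLength t).toAdd := by
    intro xy h
    simpa using congrArg (fun r => (traceLength r).toAdd) h
  refine ⟨hx, le_of_mul_le_mul_right ?_ (traceLength_pos hv)⟩
  have := Nat.mul_le_mul_right (traceLength u).toAdd hx
  linarith [length_eq h, length_eq h']

end PowerEquation

theorem power_equation_semilinear_general (A : Type) (I : A → A → Prop)
    (hirr : ∀ a, ¬ I a a) (hsym : ∀ a b, I a b → I b a)
    (p u s q v t : Trace A I) (hv : v ≠ 1) :
    ∃ (r : ℕ) (a b c d : Fin r → ℕ),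
      {xy : ℕ × ℕ | p * u ^ xy.1 * s = q * v ^ xy.2 * t} =
        ⋃ i : Fin r, {xy : ℕ × ℕ | ∃ z : ℕ, xy = (a i + b i * z, c i + d i * z)} :=
  (isFiniteUnionOfProgressions_of_add_nsmul_mem
    (fun _ h _ h' => le_of_mem_powerSolutions hv h h')
    (fun _ h _ h' => add_nsmul_mem_powerSolutions hirr hsym h h')).exists_fin

/-- The solution set of p u^x s = q v^y t (u, v nonempty connected) is a finite
union of linear sets {(a+bz, c+dz) : z ∈ ℕ}. -/
theorem power_equation_semilinear (A : Type) [Fintype A] (I : A → A → Prop)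
    (hirr : ∀ a, ¬ I a a) (hsym : ∀ a b, I a b → I b a)
    (p u s q v t : Trace A I) (hu : u ≠ 1) (hv : v ≠ 1)
    (hcu : TraceConnected A I u) (hcv : TraceConnected A I v) :
    ∃ (r : ℕ) (a b c d : Fin r → ℕ),
      {xy : ℕ × ℕ | p * u ^ xy.1 * s = q * v ^ xy.2 * t} =
        ⋃ i : Fin r, {xy : ℕ × ℕ | ∃ z : ℕ, xy = (a i + b i * z, c i + d i * z)} :=
  power_equation_semilinear_general A I hirr hsym p u s q v t hv
end
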